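/- arXiv:1305.2156 — 4 statements merged into one kernel-verified Lean document; each statement's English description precedes it below -/
import Mathlib

section
/- Let G be a simple loony endgame consisting only of chains (each of length ≥ 3), with lengths c_1, ..., c_n (n ≥ 1), and set c = 4 + Σ_{i=1}^n (c_i - 4). Then v(G) = c if c ≥ 1, and if c ≤ 0 then v(G) ∈ {1, 2} with v(G) ≡ c (mod 2). -/
/-- A component of a dots-and-boxes endgame: a chain or a loop, with an integer length. -/
inductive Comp : Type
  | chain (c : ℤ) : Comp
  | loop (l : ℤ) : Comp
  deriving DecidableEq

/-- The length (number of boxes) of a component. -/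
def Comp.len : Comp → ℤ
  | .chain c => c
  | .loop l => l

/-- A simple loony endgame: a multiset of chains of length ≥ 3 and loops of even length ≥ 4. -/
def IsSimpleLoony (G : Multiset Comp) : Prop :=
  ∀ p ∈ G, match p with
    | .chain c => 3 ≤ c
    | .loop l => 4 ≤ l ∧ Even l

/-- Fuel-indexed value function. -/
noncomputable def vAux : ℕ → Multiset Comp → ℤ
  | 0, _ => 0
  | n + 1, G =>
    if G = 0 then 0
    else sInf { x : ℤ | ∃ p ∈ G,
      x = match p with
        | Comp.chain c => c - 2 + |vAux n (G.erase p) - 2|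
        | Comp.loop l => l - 4 + |vAux n (G.erase p) - 4| }

/-- The value of a simple loony endgame: 0 on the empty game; on a nonempty game, the
minimum over components of `c - 2 + |v(G∖{c}) - 2|` for a chain of length `c` and
`ℓ - 4 + |v(G∖{ℓ}) - 4|` for a loop of length `ℓ`. -/
noncomputable def v (G : Multiset Comp) : ℤ := vAux (Multiset.card G) G

/-- The fully controlled value: Σ_chains (c - 4) + Σ_loops (ℓ - 8). -/
def fcv (G : Multiset Comp) : ℤ :=
  (G.map (fun p => match p with
    | Comp.chain c => c - 4
    | Comp.loop l => l - 8)).sum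

/-- The terminal bonus. -/
noncomputable def tb (G : Multiset Comp) : ℤ :=
  open Classical in
  if G = 0 then 0
  else if (∃ c, 4 ≤ c ∧ Comp.chain c ∈ G) ∨ (∀ l, Comp.loop l ∉ G) then 4
  else if ∀ c, Comp.chain c ∉ G then 8
  else 6

/-- The controlled value. -/
noncomputable def cv (G : Multiset Comp) : ℤ := fcv G + tb G

/-! Write `c(C) = 4 + Σ (cᵢ - 4)`. Removing a chain of length `a` leaves a game with
`c = c(C) - a + 4`, so by induction the option `a - 2 + |v - 2|` of that chain is worth `c(C)`
when `a ≤ c(C) + 2`, and otherwise `a - 2` or `a - 1` according to the parity of `c(C) - a`.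
This is never below the claimed value, which is attained by a chain with `a ≤ c(C) + 2` when
`c(C) ≥ 1`, and by a `3`-chain otherwise: chains of length `≥ 4` alone give `c(C) ≥ 4`. -/

lemma Comp.chain_injective : Function.Injective Comp.chain := fun _ _ h => by cases h; rfl

lemma v_zero : v 0 = 0 := by simp [v, vAux]

lemma v_eq_sInf {G : Multiset Comp} (hG : G ≠ 0) :
    v G = sInf { x : ℤ | ∃ p ∈ G,
      x = match p with
        | Comp.chain c => c - 2 + |v (G.erase p) - 2|
        | Comp.loop l => l - 4 + |v (G.erase p) - 4| } := by
  obtain ⟨k, hk⟩ := Nat.exists_eq_add_one_of_ne_zero (Multiset.card_pos.mpr hG).ne'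
  have hfuel : ∀ p ∈ G, vAux k (G.erase p) = v (G.erase p) := fun p hp => by
    rw [v, Multiset.card_erase_of_mem hp, hk, Nat.pred_succ]
  rw [v, hk, vAux, if_neg hG]
  congr 1
  ext x
  constructor <;> rintro ⟨p, hp, hx⟩ <;> refine ⟨p, hp, ?_⟩ <;>
    cases p <;> simp only [hfuel _ hp] at hx ⊢ <;> exact hx

lemma v_map_chain_eq_sInf {C : Multiset ℤ} (hC : C ≠ 0) :
    v (C.map Comp.chain) =
      sInf { x : ℤ | ∃ a ∈ C, x = a - 2 + |v ((C.erase a).map Comp.chain) - 2| } := by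
  rw [v_eq_sInf (by simpa using hC)]
  congr 1
  ext x
  constructor
  · rintro ⟨_, hp, rfl⟩
    obtain ⟨a, ha, rfl⟩ := Multiset.mem_map.mp hp
    exact ⟨a, ha, by rw [Multiset.map_erase _ Comp.chain_injective]⟩
  · rintro ⟨a, ha, rfl⟩
    exact ⟨Comp.chain a, Multiset.mem_map_of_mem _ ha,
      by rw [Multiset.map_erase _ Comp.chain_injective]⟩

/-- `cv (C.map Comp.chain)` for `C ≠ 0`; note `chainCV 0 = 4`. -/
def chainCV (C : Multiset ℤ) : ℤ := 4 + (C.map (· - 4)).sum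

def chainValue (c : ℤ) : ℤ := if 1 ≤ c then c else if Even c then 2 else 1

lemma chainCV_erase {C : Multiset ℤ} {a : ℤ} (ha : a ∈ C) :
    chainCV (C.erase a) = chainCV C - a + 4 := by
  conv_rhs => rw [chainCV, ← Multiset.cons_erase ha, Multiset.map_cons, Multiset.sum_cons]
  rw [chainCV]
  ring

lemma exists_mem_le_chainCV_add_two {C : Multiset ℤ} (hC : C ≠ 0) (h : 1 ≤ chainCV C) :
    ∃ a ∈ C, a ≤ chainCV C + 2 := by
  by_contra! hlong
  obtain ⟨a, ha⟩ := Multiset.exists_mem_of_ne_zero hC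
  have hnonneg : ∀ y ∈ C.map (· - 4), 0 ≤ y := by
    simp only [Multiset.mem_map]
    rintro _ ⟨b, hb, rfl⟩
    linarith [hlong b hb]
  have := Multiset.single_le_sum hnonneg _ (Multiset.mem_map_of_mem (· - 4) ha)
  linarith [hlong a ha, show chainCV C = 4 + (C.map (· - 4)).sum from rfl]

lemma three_mem_of_chainCV_nonpos {C : Multiset ℤ} (h3 : ∀ a ∈ C, 3 ≤ a)
    (h : chainCV C ≤ 0) : (3 : ℤ) ∈ C := by
  by_contra hno
  have hnonneg : ∀ y ∈ C.map (· - 4), 0 ≤ y := by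
    simp only [Multiset.mem_map]
    rintro _ ⟨b, hb, rfl⟩
    have hb3 : b ≠ 3 := fun h => hno (h ▸ hb)
    have := h3 b hb
    omega
  linarith [Multiset.sum_nonneg hnonneg, show chainCV C = 4 + (C.map (· - 4)).sum from rfl]

/-- The value of the option of a chain of length `a` in a game of chains with
`chainCV = c`. -/
def chainOptionValue (a c : ℤ) : ℤ := if a ≤ c + 2 then c else if Even (c - a) then a - 2 else a - 1

lemma chainOptionValue_eq (a c : ℤ) :
    a - 2 + |chainValue (c - a + 4) - 2| = chainOptionValue a c := by
  unfold chainOptionValue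
  rcases abs_cases (chainValue (c - a + 4) - 2) with ⟨h, hsign⟩ | ⟨h, hsign⟩ <;>
    rw [h] <;> unfold chainValue at * <;> split_ifs at * <;>
    first
      | omega
      | (simp only [Int.even_iff] at *; omega)

lemma chainValue_le_chainOptionValue (a c : ℤ) (ha : 3 ≤ a) : chainValue c ≤ chainOptionValue a c := by
  unfold chainValue chainOptionValue
  split_ifs <;> simp -failIfUnchanged only [Int.even_iff] at * <;> omega

lemma chainOptionValue_three_of_nonpos {c : ℤ} (hc : c ≤ 0) : chainOptionValue 3 c = chainValue c := by
  unfold chainValue chainOptionValue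
  split_ifs <;> simp -failIfUnchanged only [Int.even_iff] at * <;> omega

theorem v_map_chain {C : Multiset ℤ} (hC : C ≠ 0) (h3 : ∀ a ∈ C, 3 ≤ a) :
    v (C.map Comp.chain) = chainValue (chainCV C) := by
  induction C using Multiset.strongInductionOn with
  | ih C ih =>
  have hoption : ∀ a ∈ C,
      a - 2 + |v ((C.erase a).map Comp.chain) - 2| = chainOptionValue a (chainCV C) := by
    intro a ha
    rw [← chainOptionValue_eq]
    by_cases hlast : C.erase a = 0
    · have hsingle : chainCV C = a := by
        have := chainCV_erase ha
        rw [hlast, show chainCV 0 = 4 from rfl] at this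
        omega
      rw [hlast, Multiset.map_zero, v_zero, hsingle]
      simp [chainValue]
    · rw [ih _ (Multiset.erase_lt.mpr ha) hlast
        (fun b hb => h3 b (Multiset.mem_of_mem_erase hb)), chainCV_erase ha]
  rw [v_map_chain_eq_sInf hC]
  refine IsLeast.csInf_eq ⟨?_, ?_⟩
  · by_cases hc : 1 ≤ chainCV C
    · obtain ⟨a, ha, hle⟩ := exists_mem_le_chainCV_add_two hC hc
      exact ⟨a, ha, by rw [hoption a ha, chainOptionValue, if_pos hle, chainValue, if_pos hc]⟩
    · have hc : chainCV C ≤ 0 := by omega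
      have ha := three_mem_of_chainCV_nonpos h3 hc
      exact ⟨3, ha, by rw [hoption 3 ha, chainOptionValue_three_of_nonpos hc]⟩
  · rintro x ⟨a, ha, rfl⟩
    rw [hoption a ha]
    exact chainValue_le_chainOptionValue a _ (h3 a ha)

theorem stmt2 (C : Multiset ℤ) (hC : C ≠ 0) (hc : ∀ c ∈ C, 3 ≤ c)
    (c : ℤ) (hdef : c = 4 + (C.map (fun x => x - 4)).sum) :
    (1 ≤ c → v (C.map Comp.chain) = c) ∧
    (c ≤ 0 → v (C.map Comp.chain) ∈ ({1, 2} : Set ℤ) ∧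
      v (C.map Comp.chain) ≡ c [ZMOD 2]) := by
  rw [v_map_chain hC hc, show chainCV C = c from hdef.symm, chainValue]
  refine ⟨fun h => if_pos h, fun h => ?_⟩
  rw [if_neg (by omega), Int.ModEq]
  by_cases hev : Even c
  · simp [hev, Int.even_iff.mp hev]
  · simp [hev, Int.not_even_iff.mp hev]
end

section
/- Let G be a simple loony endgame consisting only of loops of even length, with c = 8 + Σ_i (ℓ_i - 8) ≤ 0, containing at least one loop of length 4, and let f ≥ 1 be the number of 4-loops in G. Let K be G with all 4-loops removed. If v(K) ≡ 2 (mod 4) then v(G) = 2; otherwise v(G) ∈ {0, 4} and v(G) ≡ v(K) + 4f (mod 8). -/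
/-- option value -/
noncomputable def opt (G : Multiset Comp) (p : Comp) : ℤ :=
  match p with
  | Comp.chain c => c - 2 + |v (G.erase p) - 2|
  | Comp.loop l => l - 4 + |v (G.erase p) - 4|

lemma vAux_eq_v : ∀ n (G : Multiset Comp), Multiset.card G ≤ n → vAux n G = v G := by
  intro n
  induction n with
  | zero =>
    intro G hG
    have : G = 0 := by
      rw [← Multiset.card_eq_zero]; omega
    subst this; rfl
  | succ n IH =>
    intro G hG
    by_cases h0 : G = 0
    · subst h0; simp [vAux, v]
    · obtain ⟨m, hm⟩ : ∃ m, Multiset.card G = m + 1 := by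
        have := Multiset.card_pos.2 (by simpa using h0)
        exact ⟨Multiset.card G - 1, by omega⟩
      have key : ∀ p ∈ G, vAux n (G.erase p) = vAux m (G.erase p) := by
        intro p hp
        have hc : Multiset.card (G.erase p) = m := by
          rw [Multiset.card_erase_of_mem hp, hm]; rfl
        have h1 : vAux n (G.erase p) = v (G.erase p) := IH _ (by omega)
        have h2 : v (G.erase p) = vAux m (G.erase p) := by rw [v, hc]
        rw [h1, h2]
      have e1 : vAux (n+1) G = sInf { x : ℤ | ∃ p ∈ G,
          x = match p with
            | Comp.chain c => c - 2 + |vAux n (G.erase p) - 2|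
            | Comp.loop l => l - 4 + |vAux n (G.erase p) - 4| } := by
        rw [vAux, if_neg h0]
      have e2 : v G = sInf { x : ℤ | ∃ p ∈ G,
          x = match p with
            | Comp.chain c => c - 2 + |vAux m (G.erase p) - 2|
            | Comp.loop l => l - 4 + |vAux m (G.erase p) - 4| } := by
        rw [v, hm, vAux, if_neg h0]
      rw [e1, e2]
      congr 1
      ext x
      constructor
      · rintro ⟨p, hp, rfl⟩
        exact ⟨p, hp, by cases p <;> simp [key _ hp]⟩
      · rintro ⟨p, hp, rfl⟩
        exact ⟨p, hp, by cases p <;> simp [key _ hp]⟩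

lemma v_eq_sInf_s5 (G : Multiset Comp) (h0 : G ≠ 0) :
    v G = sInf { x : ℤ | ∃ p ∈ G, x = opt G p } := by
  obtain ⟨m, hm⟩ : ∃ m, Multiset.card G = m + 1 := by
    have := Multiset.card_pos.2 (by simpa using h0)
    exact ⟨Multiset.card G - 1, by omega⟩
  rw [v, hm, vAux, if_neg h0]
  congr 1
  ext x
  have key : ∀ p ∈ G, vAux m (G.erase p) = v (G.erase p) := by
    intro p hp
    have hc : Multiset.card (G.erase p) = m := by
      rw [Multiset.card_erase_of_mem hp, hm]; rfl
    rw [v, hc]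
  constructor
  · rintro ⟨p, hp, rfl⟩
    exact ⟨p, hp, by cases p <;> simp [opt, key _ hp]⟩
  · rintro ⟨p, hp, rfl⟩
    exact ⟨p, hp, by cases p <;> simp [opt, key _ hp]⟩

lemma optSet_finite (G : Multiset Comp) : { x : ℤ | ∃ p ∈ G, x = opt G p }.Finite := by
  have : { x : ℤ | ∃ p ∈ G, x = opt G p } = opt G '' { p | p ∈ G } := by
    ext x; simp [Set.mem_image, eq_comm]
  rw [this]
  exact (G.finite_toSet).image _

lemma v_le_opt (G : Multiset Comp) (p : Comp) (hp : p ∈ G) : v G ≤ opt G p := by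
  have h0 : G ≠ 0 := by rintro rfl; simp at hp
  rw [v_eq_sInf_s5 G h0]
  exact csInf_le (optSet_finite G).bddBelow ⟨p, hp, rfl⟩

lemma v_exists_opt (G : Multiset Comp) (h0 : G ≠ 0) : ∃ p ∈ G, v G = opt G p := by
  obtain ⟨q, hq⟩ := Multiset.exists_mem_of_ne_zero h0
  have hne : { x : ℤ | ∃ p ∈ G, x = opt G p }.Nonempty := ⟨opt G q, q, hq, rfl⟩
  have := hne.csInf_mem (optSet_finite G)
  rw [v_eq_sInf_s5 G h0]
  exact this

def T (x : ℤ) : ℤ := |x - 4|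

lemma T_nonneg (x : ℤ) : 0 ≤ T x := abs_nonneg _

lemma Tit_nonneg (k : ℕ) (x : ℤ) (hx : 0 ≤ x) : 0 ≤ T^[k] x := by
  cases k with
  | zero => simpa
  | succ k => rw [Function.iterate_succ_apply']; exact T_nonneg _

lemma Tit_ge (k : ℕ) (x : ℤ) : x - 4 * k ≤ T^[k] x := by
  induction k with
  | zero => simp
  | succ k IH =>
    rw [Function.iterate_succ_apply']
    have : T^[k] x - 4 ≤ T (T^[k] x) := by
      rw [T]; exact le_abs_self _
    push_cast
    push_cast at IH
    linarith

lemma Tit_eq_of_le (k : ℕ) (x : ℤ) (h : 4 * k ≤ x) : T^[k] x = x - 4 * k := by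
  induction k with
  | zero => simp
  | succ k IH =>
    rw [Function.iterate_succ_apply', IH (by omega), T]
    rw [abs_of_nonneg (by omega)]
    push_cast; ring

lemma Tit_le (k : ℕ) (x : ℤ) (hx : 0 ≤ x) : T^[k] x ≤ max 4 (x - 4 * k) := by
  induction k with
  | zero => simp
  | succ k IH =>
    rw [Function.iterate_succ_apply']
    have h1 : 0 ≤ T^[k] x := Tit_nonneg k x hx
    have h2 : T (T^[k] x) ≤ max 4 (T^[k] x - 4) := by
      rw [T]; rcases abs_cases (T^[k] x - 4) with ⟨h, _⟩ | ⟨h, _⟩ <;> omega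
    have : (4 : ℤ) * (k + 1 : ℕ) = 4 * k + 4 := by push_cast; ring
    rw [this]
    rcases le_max_iff.1 IH with h | h <;> rcases le_max_iff.1 h2 with h' | h' <;>
      simp only [le_max_iff] <;> omega

lemma Tit_mod4 (k : ℕ) (x : ℤ) (hx : 0 ≤ x) (he : x % 2 = 0) :
    T^[k] x % 4 = x % 4 ∧ T^[k] x % 2 = 0 := by
  induction k with
  | zero => simp [he]
  | succ k IH =>
    rw [Function.iterate_succ_apply']
    have h1 : 0 ≤ T^[k] x := Tit_nonneg k x hx
    rw [T]
    rcases abs_cases (T^[k] x - 4) with ⟨h, _⟩ | ⟨h, _⟩ <;> omega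

lemma Tit_mod8 (k : ℕ) (x : ℤ) (hx : 0 ≤ x) (he : x % 4 = 0) :
    T^[k] x % 8 = (x + 4 * k) % 8 := by
  induction k with
  | zero => simp
  | succ k IH =>
    rw [Function.iterate_succ_apply']
    have h1 : 0 ≤ T^[k] x := Tit_nonneg k x hx
    have h4 : T^[k] x % 4 = 0 := by
      have := Tit_mod4 k x hx (by omega)
      omega
    have : (4 : ℤ) * (k + 1 : ℕ) = 4 * (k : ℤ) + 4 := by push_cast; ring
    rw [this, T]
    rcases abs_cases (T^[k] x - 4) with ⟨h, _⟩ | ⟨h, _⟩ <;> omega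

def F (s : ℤ) : ℤ := if 2 ≤ s then s else if s % 4 = 0 then 4 else 2

lemma F_ge (s : ℤ) : 2 ≤ F s := by
  rw [F]; split <;> [skip; split] <;> omega

lemma F_even (s : ℤ) (he : s % 2 = 0) : F s % 2 = 0 := by
  rw [F]; split <;> [omega; split] <;> omega

lemma F_le (s : ℤ) : F s ≤ max s 4 := by
  rw [F]; split <;> [simp [le_max_iff]; split] <;> simp [le_max_iff]

-- key inequality C1'
lemma C1 (f : ℕ) (l s' : ℤ) (hl : 6 ≤ l) (hle : l % 2 = 0) (hse : s' % 2 = 0) :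
    T^[f] (F (s' + l - 8)) ≤ l - 4 + T^[f + 1] (F s') := by
  set y := F s' with hy
  set z := F (s' + l - 8) with hz
  have hy2 : 2 ≤ y := F_ge _
  have hz2 : 2 ≤ z := F_ge _
  have hye : y % 2 = 0 := F_even _ hse
  have hze : z % 2 = 0 := F_even _ (by omega)
  have hzle : z ≤ max (y + l - 8) 4 := by
    rcases le_or_gt 2 (s' + l - 8) with h | h
    · have : z = s' + l - 8 := by rw [hz, F, if_pos h]
      have hsy : s' ≤ y := by
        rw [hy, F]; split <;> [omega; split] <;> omega
      simp only [le_max_iff]; omega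
    · have : z ≤ 4 := by
        rw [hz, F, if_neg (by omega)]; split <;> omega
      simp only [le_max_iff]; omega
  have hLle : T^[f] z ≤ max 4 (y + l - 8 - 4 * f) := by
    have := Tit_le f z (by omega)
    simp only [le_max_iff] at *
    omega
  have hRge1 : y - 4 * (f + 1 : ℕ) ≤ T^[f+1] y := Tit_ge _ _
  have hRge0 : 0 ≤ T^[f+1] y := Tit_nonneg _ _ (by omega)
  have hcast : (4 : ℤ) * ((f : ℕ) + 1 : ℕ) = 4 * (f : ℤ) + 4 := by push_cast; ring
  rw [hcast] at hRge1
  rcases le_or_gt 8 l with h8 | h8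
  · -- l ≥ 8 : RHS ≥ max 4 (y+l-8-4f)
    simp only [le_max_iff] at hLle
    omega
  · -- l = 6
    have hl6 : l = 6 := by omega
    subst hl6
    rcases le_or_gt 2 (T^[f+1] y) with hT | hT
    · simp only [le_max_iff] at hLle; omega
    · -- T^[f+1] y ∈ {0,1} hence = 0 and y % 4 = 0
      have hmy := Tit_mod4 (f+1) y (by omega) hye
      have hy4 : y % 4 = 0 := by
        rcases Int.emod_emod_of_dvd y (by norm_num : (2:ℤ) ∣ 4) with _
        omega
      -- y ≤ 4f+4
      have hyle : y ≤ 4 * f + 4 := by omega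
      rcases le_or_gt 2 s' with hs2 | hs2
      · have hys : y = s' := by rw [hy, F, if_pos hs2]
        have hs4 : 4 ≤ s' := by omega
        have hzval : z = s' - 2 := by
          rw [hz, show s' + 6 - 8 = s' - 2 by ring, F, if_pos (by omega)]
        have hmz := Tit_mod4 f z (by omega) hze
        have := Tit_le f z (by omega)
        simp only [le_max_iff] at this
        omega
      · have hyval : y = 4 := by
          rw [hy, F, if_neg (by omega)] at hy4 ⊢
          split at hy4 <;> simp_all
        have hs'4 : s' % 4 = 0 := by
          rw [hy, F, if_neg (by omega)] at hyval
          by_contra hc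
          rw [if_neg hc] at hyval; omega
        have hzval : z = 2 := by
          rw [hz, F, if_neg (by omega), if_neg (by omega)]
        rw [hzval]
        have hmz := Tit_mod4 f 2 (by omega) (by omega)
        have := Tit_le f 2 (by omega)
        simp only [le_max_iff] at this
        omega

lemma C2 (f : ℕ) (l : ℤ) (hl : 6 ≤ l) (hle : l % 2 = 0) :
    T^[f] l ≤ l - 4 + T^[f + 1] 0 := by
  cases f with
  | zero =>
    have h1 : T^[1] (0:ℤ) = 4 := by simp [T]
    simp only [Function.iterate_zero_apply, h1]
    omega
  | succ f =>
    have hR0 : 0 ≤ T^[f+1+1] (0:ℤ) := Tit_nonneg _ _ le_rfl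
    have hle' := Tit_le (f+1) l (by omega)
    simp only [le_max_iff] at hle'
    rcases hle' with h | h
    · rcases le_or_gt 8 l with h8 | h8
      · omega
      · have hl6 : l = 6 := by omega
        subst hl6
        have hm := Tit_mod4 (f+1) 6 (by omega) (by omega)
        have hnn := Tit_nonneg (f+1) (6:ℤ) (by omega)
        omega
    · have : (4:ℤ) * (f+1 : ℕ) ≥ 4 := by push_cast; omega
      omega

lemma T_def (x : ℤ) : T x = |x - 4| := rfl

noncomputable def vL (L : Multiset ℤ) : ℤ := v (L.map Comp.loop)

lemma loop_inj : Function.Injective Comp.loop := by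
  intro a b h; cases h; rfl

lemma vL_le (L : Multiset ℤ) (l : ℤ) (hl : l ∈ L) :
    vL L ≤ l - 4 + |vL (L.erase l) - 4| := by
  have hmem : Comp.loop l ∈ L.map Comp.loop := Multiset.mem_map_of_mem _ hl
  have h := v_le_opt (L.map Comp.loop) (Comp.loop l) hmem
  rw [opt, ← Multiset.map_erase _ loop_inj] at h
  exact h

lemma vL_exists (L : Multiset ℤ) (h0 : L ≠ 0) :
    ∃ l ∈ L, vL L = l - 4 + |vL (L.erase l) - 4| := by
  have h0' : L.map Comp.loop ≠ 0 := by simpa using h0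
  obtain ⟨p, hp, hval⟩ := v_exists_opt (L.map Comp.loop) h0'
  obtain ⟨l, hl, rfl⟩ := Multiset.mem_map.1 hp
  refine ⟨l, hl, ?_⟩
  rw [opt, ← Multiset.map_erase _ loop_inj] at hval
  exact hval

noncomputable def W (L : Multiset ℤ) : ℤ :=
  T^[L.count 4]
    (if L.filter (fun l => l ≠ 4) = 0 then 0
     else F (8 + ((L.filter (fun l => l ≠ 4)).map (fun l => l - 8)).sum))

lemma filter_erase_ne (L : Multiset ℤ) (l : ℤ) (hl : l ≠ 4) :
    (L.erase l).filter (fun x => x ≠ 4) = (L.filter (fun x => x ≠ 4)).erase l := by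
  ext b
  by_cases hb : b = l
  · subst hb
    simp only [Multiset.count_filter, Multiset.count_erase_self, if_pos hl]
  · simp only [Multiset.count_filter, Multiset.count_erase_of_ne hb]

lemma W3 (s : ℤ) (hs : s ≤ 0) (he : s % 2 = 0) : 2 + T (F (s + 2)) = F s := by
  rcases eq_or_lt_of_le hs with h | h
  · rw [h]
    norm_num [F, T]
  · have h1 : F (s + 2) = if (s + 2) % 4 = 0 then 4 else 2 := by
      rw [F, if_neg (by omega)]
    have h2 : F s = if s % 4 = 0 then 4 else 2 := by
      rw [F, if_neg (by omega)]
    have hT4 : T 4 = 0 := by norm_num [T]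
    have hT2 : T 2 = 2 := by norm_num [T]
    rw [h1, h2]
    by_cases hm : s % 4 = 0
    · rw [if_pos hm, if_neg (by omega), hT2]; norm_num
    · rw [if_neg hm, if_pos (by omega), hT4]; norm_num

theorem vL_eq_W (L : Multiset ℤ) (hL : ∀ l ∈ L, 4 ≤ l ∧ Even l) : vL L = W L := by
  induction L using Multiset.strongInductionOn with
  | _ L IH =>
  by_cases h0 : L = 0
  · subst h0
    simp [vL, v, vAux, W]
  have hLm : ∀ l ∈ L, l = 4 ∨ (6 ≤ l ∧ l % 2 = 0) := by
    intro l hl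
    obtain ⟨h4, he⟩ := hL l hl
    rw [Int.even_iff] at he
    omega
  set K := L.filter (fun l => l ≠ 4) with hK
  set s : ℤ := 8 + (K.map (fun l => l - 8)).sum with hs
  have hKm : ∀ l ∈ K, 6 ≤ l ∧ l % 2 = 0 := by
    intro l hl
    rw [hK, Multiset.mem_filter] at hl
    rcases hLm l hl.1 with h | h
    · exact absurd h hl.2
    · exact h
  have hse : s % 2 = 0 := by
    have hdvd : (2 : ℤ) ∣ (K.map (fun l => l - 8)).sum := by
      apply Multiset.dvd_sum
      intro x hx
      obtain ⟨l, hl, rfl⟩ := Multiset.mem_map.1 hx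
      have := (hKm l hl).2
      omega
    omega
  have hWer : ∀ l ∈ K, W (L.erase l) =
      T^[L.count 4] (if K.erase l = 0 then 0 else F (s + 8 - l)) := by
    intro l hl
    have hl4 : l ≠ 4 := by rw [hK, Multiset.mem_filter] at hl; exact hl.2
    have hcnt : (L.erase l).count 4 = L.count 4 :=
      Multiset.count_erase_of_ne (by omega) _
    have hfil : (L.erase l).filter (fun x => x ≠ 4) = K.erase l := by
      rw [filter_erase_ne L l hl4, ← hK]
    unfold W
    rw [hcnt, hfil]
    congr 1
    by_cases he : K.erase l = 0
    · rw [if_pos he, if_pos he]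
    · rw [if_neg he, if_neg he]
      congr 1
      have hcons : K = l ::ₘ K.erase l := (Multiset.cons_erase hl).symm
      have hsplit : (K.map (fun m => m - 8)).sum
          = (l - 8) + ((K.erase l).map (fun m => m - 8)).sum := by
        conv_lhs => rw [hcons]
        rw [Multiset.map_cons, Multiset.sum_cons]
      omega
  by_cases h4 : (4 : ℤ) ∈ L
  · -- at least one 4-loop
    obtain ⟨f', hf'⟩ : ∃ f', L.count 4 = f' + 1 :=
      ⟨L.count 4 - 1, by have := Multiset.count_pos.2 h4; omega⟩
    have hIH4 : vL (L.erase 4) = W (L.erase 4) :=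
      IH _ (Multiset.erase_lt.2 h4) (fun l hl => hL l (Multiset.mem_of_mem_erase hl))
    have hWe4 : W (L.erase 4) = T^[f'] (if K = 0 then 0 else F s) := by
      have hcnt : (L.erase 4).count 4 = f' := by
        have := Multiset.count_erase_self (4 : ℤ) L
        omega
      have hfil : (L.erase 4).filter (fun x => x ≠ 4) = K := by
        rw [hK]
        ext b
        by_cases hb : b = 4
        · subst hb
          rw [Multiset.count_filter, Multiset.count_filter, if_neg (by simp),
            if_neg (by simp)]
        · rw [Multiset.count_filter, Multiset.count_filter, if_pos hb, if_pos hb,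
            Multiset.count_erase_of_ne hb]
      unfold W
      rw [hcnt, hfil, ← hs]
    have hWL : W L = T (W (L.erase 4)) := by
      rw [hWe4]
      unfold W
      rw [← hK, ← hs, hf', Function.iterate_succ_apply']
    have hub : vL L ≤ W L := by
      have h := vL_le L 4 h4
      rw [hIH4] at h
      calc vL L ≤ 4 - 4 + |W (L.erase 4) - 4| := h
        _ = T (W (L.erase 4)) := by rw [T_def]; ring
        _ = W L := hWL.symm
    obtain ⟨l, hlL, hval⟩ := vL_exists L h0
    rcases hLm l hlL with rfl | hl6
    · rw [hIH4] at hval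
      rw [hval, hWL, T_def]
      ring
    · have hlK : l ∈ K := by rw [hK, Multiset.mem_filter]; exact ⟨hlL, by omega⟩
      have hKne : K ≠ 0 := by rintro hE; rw [hE] at hlK; simp at hlK
      have hIHl : vL (L.erase l) = W (L.erase l) :=
        IH _ (Multiset.erase_lt.2 hlL) (fun m hm => hL m (Multiset.mem_of_mem_erase hm))
      rw [hIHl, hWer l hlK] at hval
      have habs : |T^[L.count 4] (if K.erase l = 0 then 0 else F (s + 8 - l)) - 4|
          = T^[L.count 4 + 1] (if K.erase l = 0 then 0 else F (s + 8 - l)) := by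
        rw [Function.iterate_succ_apply', T_def]
      have hWLv : W L = T^[L.count 4] (F s) := by
        unfold W; rw [← hK, ← hs, if_neg hKne]
      have hlb : W L ≤ vL L := by
        rw [hval, habs, hWLv]
        by_cases hKe : K.erase l = 0
        · have hKl : K = {l} := by
            rw [← Multiset.cons_erase hlK, hKe]; rfl
          have hsum : (K.map (fun m => m - 8)).sum = l - 8 := by rw [hKl]; simp
          have hsl : s = l := by omega
          have hFl : F l = l := by rw [F, if_pos (by have := (hKm l hlK).1; omega)]
          rw [if_pos hKe, hsl, hFl]
          exact C2 _ l (hKm l hlK).1 (hKm l hlK).2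
        · rw [if_neg hKe]
          have h6 := hKm l hlK
          have hC := C1 (L.count 4) l (s + 8 - l) h6.1 h6.2 (by omega)
          rw [show s + 8 - l + l - 8 = s by ring] at hC
          exact hC
      exact le_antisymm hub hlb
  · -- no 4-loops
    have hcnt0 : L.count 4 = 0 := Multiset.count_eq_zero.2 h4
    have hKL : K = L := by
      rw [hK]
      apply Multiset.filter_eq_self.2
      intro l hl heq
      exact h4 (heq ▸ hl)
    have hKne : K ≠ 0 := by rw [hKL]; exact h0
    have hWLv : W L = F s := by
      unfold W
      rw [← hK, ← hs, hcnt0, if_neg hKne, Function.iterate_zero_apply]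
    obtain ⟨l, hlL, hval⟩ := vL_exists L h0
    have hlK : l ∈ K := by rw [hKL]; exact hlL
    have h6 := hKm l hlK
    have hIHl : vL (L.erase l) = W (L.erase l) :=
      IH _ (Multiset.erase_lt.2 hlL) (fun m hm => hL m (Multiset.mem_of_mem_erase hm))
    rw [hIHl, hWer l hlK, hcnt0, Function.iterate_zero_apply] at hval
    have hlb : W L ≤ vL L := by
      rw [hWLv, hval]
      by_cases hKe : K.erase l = 0
      · have hKl : K = {l} := by
          rw [← Multiset.cons_erase hlK, hKe]; rfl
        have hsum : (K.map (fun m => m - 8)).sum = l - 8 := by rw [hKl]; simp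
        have hsl : s = l := by omega
        rw [if_pos hKe]
        have hFs : F s = s := by rw [F, if_pos (by omega)]
        have habs0 : |(0 : ℤ) - 4| = 4 := by norm_num
        rw [hFs, habs0]
        omega
      · rw [if_neg hKe]
        have hC := C1 0 l (s + 8 - l) h6.1 h6.2 (by omega)
        rw [show s + 8 - l + l - 8 = s by ring] at hC
        simpa [T_def] using hC
    have hub : vL L ≤ W L := by
      rcases le_or_gt 2 s with hs2 | hs2
      · have hex : ∃ m ∈ L, m ≤ s + 4 := by
          by_contra hcon
          push_neg at hcon
          obtain ⟨m₀, hm₀⟩ := Multiset.exists_mem_of_ne_zero hKne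
          have hm₀L : m₀ ∈ L := by rw [← hKL]; exact hm₀
          have hcons : K = m₀ ::ₘ K.erase m₀ := (Multiset.cons_erase hm₀).symm
          have hsplit : (K.map (fun m => m - 8)).sum
              = (m₀ - 8) + ((K.erase m₀).map (fun m => m - 8)).sum := by
            conv_lhs => rw [hcons]
            rw [Multiset.map_cons, Multiset.sum_cons]
          have hrest : 0 ≤ ((K.erase m₀).map (fun m => m - 8)).sum := by
            apply Multiset.sum_nonneg
            intro x hx
            obtain ⟨m, hm, rfl⟩ := Multiset.mem_map.1 hx
            have hmK : m ∈ K := Multiset.mem_of_mem_erase hm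
            have hmL : m ∈ L := by rw [← hKL]; exact hmK
            have := hcon m hmL
            have := (hKm m hmK).2
            omega
          have h1 := hcon m₀ hm₀L
          have h2 := (hKm m₀ hm₀).2
          omega
        obtain ⟨m, hmL, hms⟩ := hex
        have hmK : m ∈ K := by rw [hKL]; exact hmL
        have hm6 := hKm m hmK
        have hIHm : vL (L.erase m) = W (L.erase m) :=
          IH _ (Multiset.erase_lt.2 hmL) (fun x hx => hL x (Multiset.mem_of_mem_erase hx))
        have h := vL_le L m hmL
        rw [hIHm, hWer m hmK, hcnt0, Function.iterate_zero_apply] at h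
        rw [hWLv]
        have hFs : F s = s := by rw [F, if_pos hs2]
        rw [hFs]
        by_cases hKe : K.erase m = 0
        · rw [if_pos hKe] at h
          have hKl : K = {m} := by
            rw [← Multiset.cons_erase hmK, hKe]; rfl
          have hsum : (K.map (fun x => x - 8)).sum = m - 8 := by rw [hKl]; simp
          have hsl : s = m := by omega
          have habs0 : |(0 : ℤ) - 4| = 4 := by norm_num
          rw [habs0] at h
          omega
        · rw [if_neg hKe] at h
          have hFs' : F (s + 8 - m) = s + 8 - m := by rw [F, if_pos (by omega)]
          rw [hFs', abs_of_nonneg (by omega)] at h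
          omega
      · have hs0 : s ≤ 0 := by omega
        have hex6 : (6 : ℤ) ∈ L := by
          by_contra h6n
          have hrest : 0 ≤ (K.map (fun m => m - 8)).sum := by
            apply Multiset.sum_nonneg
            intro x hx
            obtain ⟨m, hm, rfl⟩ := Multiset.mem_map.1 hx
            have hm6 := hKm m hm
            have hmL : m ∈ L := by rw [← hKL]; exact hm
            have : m ≠ 6 := fun hE => h6n (hE ▸ hmL)
            omega
          omega
        have h6K : (6 : ℤ) ∈ K := by rw [hKL]; exact hex6
        have hKe : K.erase 6 ≠ 0 := by
          intro hE
          have hKl : K = {6} := by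
            rw [← Multiset.cons_erase h6K, hE]; rfl
          have hsum : (K.map (fun m => m - 8)).sum = 6 - 8 := by rw [hKl]; simp
          omega
        have hIH6 : vL (L.erase 6) = W (L.erase 6) :=
          IH _ (Multiset.erase_lt.2 hex6) (fun x hx => hL x (Multiset.mem_of_mem_erase hx))
        have h := vL_le L 6 hex6
        rw [hIH6, hWer 6 h6K, hcnt0, Function.iterate_zero_apply, if_neg hKe] at h
        rw [hWLv, ← W3 s hs0 hse, T_def]
        rw [show s + 8 - 6 = s + 2 by ring] at h
        linarith
    exact le_antisymm hub hlb

theorem stmt5 (L : Multiset ℤ) (hl : ∀ l ∈ L, 4 ≤ l ∧ Even l)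
    (c : ℤ) (hdef : c = 8 + (L.map (fun l => l - 8)).sum) (hc : c ≤ 0)
    (f : ℕ) (hf : f = L.count 4) (hf1 : 1 ≤ f)
    (K : Multiset Comp) (hK : K = (L.filter (· ≠ 4)).map Comp.loop) :
    (v K ≡ 2 [ZMOD 4] → v (L.map Comp.loop) = 2) ∧
    (¬ v K ≡ 2 [ZMOD 4] →
      v (L.map Comp.loop) ∈ ({0, 4} : Set ℤ) ∧
      v (L.map Comp.loop) ≡ v K + 4 * (f : ℤ) [ZMOD 8]) := by
  subst hdef hf hK
  set Km := L.filter (fun l => l ≠ 4) with hKm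
  set sK : ℤ := 8 + (Km.map (fun l => l - 8)).sum with hsK
  have hKmem : ∀ l ∈ Km, 4 ≤ l ∧ Even l := by
    intro l hlm
    rw [hKm, Multiset.mem_filter] at hlm
    exact hl l hlm.1
  have hKm6 : ∀ l ∈ Km, 6 ≤ l ∧ l % 2 = 0 := by
    intro l hlm
    have h1 := hKmem l hlm
    rw [hKm, Multiset.mem_filter] at hlm
    rw [Int.even_iff] at h1
    have := hlm.2
    constructor <;> omega
  have hcnt0 : Km.count 4 = 0 := by
    apply Multiset.count_eq_zero.2
    intro hmem
    rw [hKm, Multiset.mem_filter] at hmem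
    exact hmem.2 rfl
  have hfil : Km.filter (fun l => l ≠ 4) = Km := by
    apply Multiset.filter_eq_self.2
    intro l hlm
    rw [hKm, Multiset.mem_filter] at hlm
    exact hlm.2
  -- value of K
  have hvK : v (Km.map Comp.loop) = (if Km = 0 then 0 else F sK) := by
    have h1 : v (Km.map Comp.loop) = W Km := vL_eq_W Km hKmem
    rw [h1]
    unfold W
    rw [hcnt0, hfil, ← hsK, Function.iterate_zero_apply]
  -- value of G
  have hvG : v (L.map Comp.loop) = T^[L.count 4] (if Km = 0 then 0 else F sK) := by
    have h1 : v (L.map Comp.loop) = W L := vL_eq_W L hl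
    rw [h1]
    unfold W
    rw [← hKm, ← hsK]
  set x : ℤ := if Km = 0 then 0 else F sK with hx
  -- sum splitting : sK = c + 4 f
  have hsplit : (L.map (fun l => l - 8)).sum
      = (Km.map (fun l => l - 8)).sum + (-4) * (L.count 4 : ℤ) := by
    have hdec : Km + L.filter (fun l => ¬ l ≠ 4) = L :=
      Multiset.filter_add_not _ L
    have hrep : L.filter (fun l => ¬ l ≠ 4) = Multiset.replicate (L.count 4) 4 := by
      rw [show L.filter (fun l => ¬ l ≠ 4) = L.filter (fun l => l = 4) from
        Multiset.filter_congr (fun l _ => by simp)]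
      exact Multiset.filter_eq' L 4
    calc (L.map (fun l => l - 8)).sum
        = ((Km + L.filter (fun l => ¬ l ≠ 4)).map (fun l => l - 8)).sum := by rw [hdec]
      _ = (Km.map (fun l => l - 8)).sum + ((L.filter (fun l => ¬ l ≠ 4)).map (fun l => l - 8)).sum := by
          rw [Multiset.map_add, Multiset.sum_add]
      _ = (Km.map (fun l => l - 8)).sum + (-4) * (L.count 4 : ℤ) := by
          rw [hrep, Multiset.map_replicate, Multiset.sum_replicate]
          norm_num
          ring
  have hsKle : sK ≤ 4 * (L.count 4 : ℤ) := by
    have hcfour : (1 : ℕ) ≤ L.count 4 := hf1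
    omega
  have hf4 : (4 : ℤ) ≤ 4 * (L.count 4 : ℤ) := by
    have hcfour : (1 : ℕ) ≤ L.count 4 := hf1
    have : (1 : ℤ) ≤ (L.count 4 : ℤ) := by exact_mod_cast hcfour
    nlinarith
  -- properties of x
  have hx0 : 0 ≤ x := by
    rw [hx]; split
    · omega
    · have := F_ge sK; omega
  have hxe : x % 2 = 0 := by
    rw [hx]; split
    · omega
    · apply F_even
      have hdvd : (2 : ℤ) ∣ (Km.map (fun l => l - 8)).sum := by
        apply Multiset.dvd_sum
        intro y hy
        obtain ⟨l, hlm, rfl⟩ := Multiset.mem_map.1 hy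
        have := (hKm6 l hlm).2
        omega
      omega
  have hxle : x ≤ 4 * (L.count 4 : ℤ) := by
    rw [hx]; split
    · omega
    · have h1 := F_le sK
      rcases le_max_iff.1 (le_refl (max sK 4)) with _ | _ <;>
        rcases max_cases sK 4 with ⟨h2, _⟩ | ⟨h2, _⟩ <;> omega
  -- properties of y = T^[count] x
  set y : ℤ := T^[L.count 4] x with hy
  have hy0 : 0 ≤ y := Tit_nonneg _ _ hx0
  have hyle4 : y ≤ 4 := by
    have := Tit_le (L.count 4) x hx0
    rcases max_cases (4 : ℤ) (x - 4 * (L.count 4 : ℤ)) with ⟨h2, _⟩ | ⟨h2, _⟩ <;> omega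
  have hym : y % 4 = x % 4 ∧ y % 2 = 0 := Tit_mod4 (L.count 4) x hx0 hxe
  constructor
  · intro h2
    change v (Km.map Comp.loop) % 4 = 2 % 4 at h2
    rw [hvK] at h2
    rw [hvG]
    omega
  · intro hn2
    change ¬ (v (Km.map Comp.loop) % 4 = 2 % 4) at hn2
    rw [hvK] at hn2
    have hx4 : x % 4 = 0 := by omega
    have hy8 : y % 8 = (x + 4 * (L.count 4 : ℤ)) % 8 := Tit_mod8 _ _ hx0 hx4
    constructor
    · rw [hvG]
      simp only [Set.mem_insert_iff, Set.mem_singleton_iff]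
      omega
    · change v (L.map Comp.loop) % 8 = (v (Km.map Comp.loop) + 4 * (L.count 4 : ℤ)) % 8
      rw [hvG, hvK]
      omega
end

section
/- Let G be a simple loony endgame, and let 3 ≤ m < n. In the game G + m + n (G plus one m-chain and one n-chain), the value of opening the m-chain is at most the value of opening the n-chain: m - 2 + |v(G + n) - 2| ≤ n - 2 + |v(G + m) - 2|. The analogous statement holds for loops: if 4 ≤ m < n are even, then m - 4 + |v(G + n_ℓ) - 4| ≤ n - 4 + |v(G + m_ℓ) - 4|. -/
/-- The cost of opening component `p` when the rest has value `t`. -/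
def cost (p : Comp) (t : ℤ) : ℤ := match p with
  | Comp.chain c => c - 2 + |t - 2|
  | Comp.loop l => l - 4 + |t - 4|

lemma vAux_succ (n : ℕ) (G : Multiset Comp) (hG : G ≠ 0) :
    vAux (n+1) G = sInf {x : ℤ | ∃ p ∈ G, x = cost p (vAux n (G.erase p))} := by
  rw [vAux, if_neg hG]
  congr 1

lemma vAux_stable : ∀ N (G : Multiset Comp), Multiset.card G ≤ N → vAux N G = v G := by
  intro N
  induction N with
  | zero =>
    intro G h
    have h0 : G = 0 := by
      rw [← Multiset.card_eq_zero]; omega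
    subst h0; rfl
  | succ N ih =>
    intro G h
    by_cases h0 : G = 0
    · subst h0; simp [v, vAux]
    · have hc : 1 ≤ Multiset.card G := by
        rcases Nat.eq_zero_or_pos (Multiset.card G) with h1 | h1
        · exact absurd (Multiset.card_eq_zero.1 h1) h0
        · exact h1
      obtain ⟨k, hk⟩ : ∃ k, Multiset.card G = k + 1 := ⟨Multiset.card G - 1, by omega⟩
      rw [v, hk, vAux_succ N G h0, vAux_succ k G h0]
      congr 1
      ext x
      constructor <;> rintro ⟨p, hp, rfl⟩ <;> refine ⟨p, hp, ?_⟩ <;>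
        [skip; skip] <;>
        · have hce : Multiset.card (G.erase p) = k := by
            rw [Multiset.card_erase_of_mem hp, hk, Nat.pred_succ]
          have h1 : vAux N (G.erase p) = v (G.erase p) := ih _ (by omega)
          have h2 : vAux k (G.erase p) = v (G.erase p) := by rw [v, hce]
          rw [h1, h2]

lemma v_cons (q : Comp) (G : Multiset Comp) :
    v (q ::ₘ G) = sInf {x : ℤ | ∃ p ∈ q ::ₘ G, x = cost p (v ((q ::ₘ G).erase p))} := by
  rw [v, Multiset.card_cons, vAux_succ _ _ (Multiset.cons_ne_zero)]
  congr 1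
  ext x
  constructor <;> rintro ⟨p, hp, rfl⟩ <;> refine ⟨p, hp, ?_⟩ <;>
    rw [vAux_stable _ _ (by rw [Multiset.card_erase_of_mem hp, Multiset.card_cons, Nat.pred_succ])]

lemma cand_finite (q : Comp) (G : Multiset Comp) :
    {x : ℤ | ∃ p ∈ q ::ₘ G, x = cost p (v ((q ::ₘ G).erase p))}.Finite := by
  have he : {x : ℤ | ∃ p ∈ q ::ₘ G, x = cost p (v ((q ::ₘ G).erase p))}
      = (fun p => cost p (v ((q ::ₘ G).erase p))) '' {p | p ∈ q ::ₘ G} := by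
    ext x; simp [Set.mem_image, eq_comm]
  rw [he]
  exact Set.Finite.image _ (Multiset.finite_toSet _)

lemma sInf_le_cand (q : Comp) (G : Multiset Comp) (p : Comp) (hp : p ∈ q ::ₘ G) :
    v (q ::ₘ G) ≤ cost p (v ((q ::ₘ G).erase p)) := by
  rw [v_cons]
  exact csInf_le (Set.Finite.bddBelow (cand_finite q G)) ⟨p, hp, rfl⟩

lemma exists_cand (q : Comp) (G : Multiset Comp) :
    ∃ p ∈ q ::ₘ G, v (q ::ₘ G) = cost p (v ((q ::ₘ G).erase p)) := by
  rw [v_cons]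
  have hne : {x : ℤ | ∃ p ∈ q ::ₘ G, x = cost p (v ((q ::ₘ G).erase p))}.Nonempty :=
    ⟨_, ⟨q, Multiset.mem_cons_self q G, rfl⟩⟩
  exact Set.Nonempty.csInf_mem hne (cand_finite q G)

lemma cost_lipschitz (p : Comp) (t₁ t₂ : ℤ) : cost p t₁ ≤ cost p t₂ + |t₁ - t₂| := by
  have key : ∀ w : ℤ, |t₁ - w| ≤ |t₂ - w| + |t₁ - t₂| := by
    intro w
    have h1 : t₁ - w = (t₂ - w) + (t₁ - t₂) := by ring
    calc |t₁ - w| = |(t₂ - w) + (t₁ - t₂)| := by rw [← h1]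
      _ ≤ |t₂ - w| + |t₁ - t₂| := abs_add_le _ _
  cases p <;> simp only [cost] <;> linarith [key 2, key 4]

lemma cost_shift (k : ℤ → Comp) (hk : k = Comp.chain ∨ k = Comp.loop) (a b t : ℤ) :
    cost (k a) t = cost (k b) t + (a - b) := by
  rcases hk with rfl | rfl <;> simp only [cost] <;> ring

lemma main_step (G : Multiset Comp) (k : ℤ → Comp) (hk : k = Comp.chain ∨ k = Comp.loop)
    (IH : ∀ p ∈ G, ∀ a b : ℤ, |v (k a ::ₘ G.erase p) - v (k b ::ₘ G.erase p)| ≤ |a - b|) :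
    ∀ a b : ℤ, |v (k a ::ₘ G) - v (k b ::ₘ G)| ≤ |a - b| := by
  have main : ∀ a b : ℤ, v (k a ::ₘ G) ≤ v (k b ::ₘ G) + |a - b| := by
    intro a b
    obtain ⟨p, hp, hv⟩ := exists_cand (k b) G
    by_cases hpb : p = k b
    · subst hpb
      rw [Multiset.erase_cons_head] at hv
      have h1 : v (k a ::ₘ G) ≤ cost (k a) (v G) := by
        have := sInf_le_cand (k a) G (k a) (Multiset.mem_cons_self _ _)
        rwa [Multiset.erase_cons_head] at this
      rw [hv]
      have h2 := cost_shift k hk a b (v G)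
      have h3 := le_abs_self (a - b)
      linarith
    · have hpG : p ∈ G := by
        rcases Multiset.mem_cons.1 hp with h | h
        · exact absurd h hpb
        · exact h
      have e1 : (k b ::ₘ G).erase p = k b ::ₘ G.erase p := Multiset.erase_cons_tail _ (Ne.symm hpb)
      have e2 : (k a ::ₘ G).erase p = k a ::ₘ G.erase p := by
        by_cases hpa : p = k a
        · subst hpa
          rw [Multiset.erase_cons_head, Multiset.cons_erase hpG]
        · exact Multiset.erase_cons_tail _ (Ne.symm hpa)
      have h1 : v (k a ::ₘ G) ≤ cost p (v (k a ::ₘ G.erase p)) := by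
        have := sInf_le_cand (k a) G p (Multiset.mem_cons_of_mem hpG)
        rwa [e2] at this
      have h2 := cost_lipschitz p (v (k a ::ₘ G.erase p)) (v (k b ::ₘ G.erase p))
      have h3 := IH p hpG a b
      have h4 := abs_le.1 h3
      rw [hv, e1]
      linarith [h4.1, h4.2]
  intro a b
  rw [abs_sub_le_iff]
  constructor
  · have := main a b; linarith
  · have := main b a; rw [abs_sub_comm] at this; linarith

lemma key_lip : ∀ N (G : Multiset Comp), Multiset.card G ≤ N →
    ∀ k : ℤ → Comp, (k = Comp.chain ∨ k = Comp.loop) →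
    ∀ a b : ℤ, |v (k a ::ₘ G) - v (k b ::ₘ G)| ≤ |a - b| := by
  intro N
  induction N with
  | zero =>
    intro G h k hk
    exact main_step G k hk (fun p hp => by
      have : G = 0 := by rw [← Multiset.card_eq_zero]; omega
      subst this; simp at hp)
  | succ N ih =>
    intro G h k hk
    exact main_step G k hk (fun p hp a b =>
      ih (G.erase p) (by rw [Multiset.card_erase_of_mem hp, Nat.pred_eq_sub_one]; omega) k hk a b)

theorem stmt8 (G : Multiset Comp) (hG : IsSimpleLoony G) (m n : ℤ) :
    (3 ≤ m → m < n →
      m - 2 + |v (Comp.chain n ::ₘ G) - 2| ≤ n - 2 + |v (Comp.chain m ::ₘ G) - 2|) ∧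
    (4 ≤ m → m < n → Even m → Even n →
      m - 4 + |v (Comp.loop n ::ₘ G) - 4| ≤ n - 4 + |v (Comp.loop m ::ₘ G) - 4|) := by
  constructor
  · intro _ hmn
    have hk := key_lip (Multiset.card G) G le_rfl Comp.chain (Or.inl rfl) n m
    have h1 := abs_sub_abs_le_abs_sub (v (Comp.chain n ::ₘ G) - 2) (v (Comp.chain m ::ₘ G) - 2)
    have he : (v (Comp.chain n ::ₘ G) - 2) - (v (Comp.chain m ::ₘ G) - 2)
        = v (Comp.chain n ::ₘ G) - v (Comp.chain m ::ₘ G) := by ring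
    rw [he] at h1
    have habs : |n - m| = n - m := abs_of_pos (by linarith)
    rw [habs] at hk
    linarith
  · intro _ hmn _ _
    have hk := key_lip (Multiset.card G) G le_rfl Comp.loop (Or.inr rfl) n m
    have h1 := abs_sub_abs_le_abs_sub (v (Comp.loop n ::ₘ G) - 4) (v (Comp.loop m ::ₘ G) - 4)
    have he : (v (Comp.loop n ::ₘ G) - 4) - (v (Comp.loop m ::ₘ G) - 4)
        = v (Comp.loop n ::ₘ G) - v (Comp.loop m ::ₘ G) := by ring
    rw [he] at h1
    have habs : |n - m| = n - m := abs_of_pos (by linarith)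
    rw [habs] at hk
    linarith
end

section
/- Let G be a simple loony endgame with cv(G) < 2. Then 0 ≤ v(G) ≤ 4 and v(G) ≡ cv(G) (mod 2). Moreover, if G contains a chain of length 3, then v(G) ≤ v(G;3) ≤ 3, where v(G;3) = 1 + |v(G∖{3}) - 2| is the value of opening a 3-chain. -/
-- ## auxiliary defs

def K : Comp → ℤ → ℤ
  | .chain c, x => c - 2 + |x - 2|
  | .loop l, x => l - 4 + |x - 4|

def w : Comp → ℤ
  | .chain c => c - 4
  | .loop l => l - 8

lemma K_eq (p : Comp) (x : ℤ) :
    (match p with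
      | Comp.chain c => c - 2 + |x - 2|
      | Comp.loop l => l - 4 + |x - 4|) = K p x := by
  cases p <;> rfl

lemma vAux_zero (n : ℕ) : vAux n 0 = 0 := by cases n <;> simp [vAux]

lemma vAux_congr : ∀ n m (G : Multiset Comp), G.card ≤ n → G.card ≤ m →
    vAux n G = vAux m G := by
  intro n
  induction n with
  | zero =>
    intro m G h1 _
    have : G = 0 := by simpa using Multiset.card_eq_zero.mp (Nat.le_zero.mp h1)
    simp [this, vAux_zero]
  | succ n ih =>
    intro m G h1 h2
    by_cases hG : G = 0
    · simp [hG, vAux_zero]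
    · have hc : 1 ≤ G.card := by
        rcases Nat.eq_zero_or_pos G.card with h | h
        · exact absurd (Multiset.card_eq_zero.mp h) hG
        · exact h
      obtain ⟨m', rfl⟩ : ∃ m', m = m' + 1 := by
        cases m with
        | zero => omega
        | succ m' => exact ⟨m', rfl⟩
      show vAux (n+1) G = vAux (m'+1) G
      unfold vAux
      rw [if_neg hG, if_neg hG]
      congr 1
      ext x
      constructor <;> rintro ⟨p, hp, rfl⟩ <;> refine ⟨p, hp, ?_⟩ <;>
        rw [K_eq, K_eq] <;>
        have hce : (G.erase p).card = G.card - 1 := by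
          rw [Multiset.card_erase_of_mem hp]; rfl
      · rw [ih n (G.erase p) (by omega) (by omega), ih m' (G.erase p) (by omega) (by omega)]
      · rw [ih n (G.erase p) (by omega) (by omega), ih m' (G.erase p) (by omega) (by omega)]

lemma vAux_v (n : ℕ) (G : Multiset Comp) (h : G.card ≤ n) : vAux n G = v G :=
  vAux_congr n G.card G h le_rfl

lemma v_rec (G : Multiset Comp) (h : G ≠ 0) :
    v G = sInf { x : ℤ | ∃ p ∈ G, x = K p (v (G.erase p)) } := by
  have hc : 1 ≤ G.card := by
    rcases Nat.eq_zero_or_pos G.card with h' | h'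
    · exact absurd (Multiset.card_eq_zero.mp h') h
    · exact h'
  obtain ⟨n, hn⟩ : ∃ n, G.card = n + 1 := ⟨G.card - 1, by omega⟩
  rw [v, hn]
  show vAux (n+1) G = _
  unfold vAux
  rw [if_neg h]
  congr 1
  ext x
  constructor <;> rintro ⟨p, hp, rfl⟩ <;> refine ⟨p, hp, ?_⟩ <;>
    rw [K_eq] <;>
    have hce : (G.erase p).card = G.card - 1 := by
      rw [Multiset.card_erase_of_mem hp]; rfl
  · rw [vAux_v n _ (by omega)]
  · rw [vAux_v n _ (by omega)]

lemma Sset_finite (G : Multiset Comp) :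
    { x : ℤ | ∃ p ∈ G, x = K p (v (G.erase p)) }.Finite := by
  have : { x : ℤ | ∃ p ∈ G, x = K p (v (G.erase p)) }
      = ↑(G.toFinset.image fun p => K p (v (G.erase p))) := by
    ext x
    simp only [Set.mem_setOf_eq, Finset.coe_image, Set.mem_image, Finset.mem_coe,
      Multiset.mem_toFinset]
    constructor
    · rintro ⟨p, hp, rfl⟩; exact ⟨p, hp, rfl⟩
    · rintro ⟨p, hp, rfl⟩; exact ⟨p, hp, rfl⟩
  rw [this]
  exact (G.toFinset.image _).finite_toSet

lemma v_le {G : Multiset Comp} {p : Comp} (hp : p ∈ G) : v G ≤ K p (v (G.erase p)) := by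
  have hG : G ≠ 0 := by
    intro h; rw [h] at hp; exact absurd hp (Multiset.notMem_zero p)
  rw [v_rec G hG]
  exact csInf_le (Sset_finite G).bddBelow ⟨p, hp, rfl⟩

lemma le_v {G : Multiset Comp} {b : ℤ} (hG : G ≠ 0)
    (hb : ∀ p ∈ G, b ≤ K p (v (G.erase p))) : b ≤ v G := by
  rw [v_rec G hG]
  obtain ⟨p, hp⟩ := Multiset.exists_mem_of_ne_zero hG
  refine le_csInf ⟨_, ⟨p, hp, rfl⟩⟩ ?_
  rintro x ⟨q, hq, rfl⟩
  exact hb q hq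

lemma v_mem {G : Multiset Comp} (hG : G ≠ 0) : ∃ p ∈ G, v G = K p (v (G.erase p)) := by
  obtain ⟨p, hp⟩ := Multiset.exists_mem_of_ne_zero hG
  have := (Set.Nonempty.csInf_mem (s := { x : ℤ | ∃ p ∈ G, x = K p (v (G.erase p)) })
    ⟨_, ⟨p, hp, rfl⟩⟩ (Sset_finite G))
  rw [← v_rec G hG] at this
  exact this

-- ## fcv lemmas

lemma fcv_def (G : Multiset Comp) : fcv G = (G.map w).sum := rfl

lemma fcv_zero : fcv 0 = 0 := rfl

lemma fcv_erase {G : Multiset Comp} {p : Comp} (hp : p ∈ G) :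
    fcv G = w p + fcv (G.erase p) := by
  conv_lhs => rw [fcv_def, ← Multiset.cons_erase hp]
  rw [Multiset.map_cons, Multiset.sum_cons, ← fcv_def]

lemma fcv_nonneg {G : Multiset Comp} (h : ∀ p ∈ G, 0 ≤ w p) : 0 ≤ fcv G := by
  rw [fcv_def]
  apply Multiset.sum_nonneg
  intro x hx
  obtain ⟨p, hp, rfl⟩ := Multiset.mem_map.mp hx
  exact h p hp

lemma fcv_nonpos {G : Multiset Comp} (h : ∀ p ∈ G, w p ≤ 0) : fcv G ≤ 0 := by
  have : -fcv G = (G.map (fun p => -(w p))).sum := by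
    rw [fcv_def, ← Multiset.sum_map_neg', Multiset.map_map]; rfl
  have h2 : 0 ≤ -fcv G := by
    rw [this]
    apply Multiset.sum_nonneg
    intro x hx
    obtain ⟨p, hp, rfl⟩ := Multiset.mem_map.mp hx
    simpa using h p hp
  linarith

-- ## tb lemmas

lemma tb_zero : tb 0 = 0 := by simp [tb]

lemma tb_le8 (G : Multiset Comp) : tb G ≤ 8 := by
  unfold tb; split_ifs <;> norm_num

lemma tb_nonneg (G : Multiset Comp) : 0 ≤ tb G := by
  unfold tb; split_ifs <;> norm_num

lemma tb_ge4 {G : Multiset Comp} (h : G ≠ 0) : 4 ≤ tb G := by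
  unfold tb; split_ifs with h1 <;> first | exact absurd h1 h | norm_num

lemma tb_eq4 {G : Multiset Comp} (h : G ≠ 0)
    (hA : (∃ c, 4 ≤ c ∧ Comp.chain c ∈ G) ∨ (∀ l, Comp.loop l ∉ G)) : tb G = 4 := by
  unfold tb; rw [if_neg h, if_pos hA]

lemma tb_eq8 {G : Multiset Comp} (hC : ∀ c, Comp.chain c ∉ G)
    (hL : ∃ l, Comp.loop l ∈ G) : tb G = 8 := by
  have h : G ≠ 0 := by
    obtain ⟨l, hl⟩ := hL
    intro h0; rw [h0] at hl; exact absurd hl (Multiset.notMem_zero _)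
  have hA : ¬((∃ c, 4 ≤ c ∧ Comp.chain c ∈ G) ∨ (∀ l, Comp.loop l ∉ G)) := by
    push_neg
    refine ⟨fun c h4 hc => hC c hc, hL⟩
  unfold tb
  rw [if_neg h, if_neg hA, if_pos hC]

lemma tb_eq6 {G : Multiset Comp} (hC : ∃ c, Comp.chain c ∈ G)
    (hL : ∃ l, Comp.loop l ∈ G) (hA : ∀ c, 4 ≤ c → Comp.chain c ∉ G) : tb G = 6 := by
  obtain ⟨c, hc⟩ := hC
  have h : G ≠ 0 := by
    intro h0; rw [h0] at hc; exact absurd hc (Multiset.notMem_zero _)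
  have hA' : ¬((∃ c, 4 ≤ c ∧ Comp.chain c ∈ G) ∨ (∀ l, Comp.loop l ∉ G)) := by
    push_neg
    exact ⟨fun c h4 => hA c h4, hL⟩
  unfold tb
  rw [if_neg h, if_neg hA', if_neg (by push_neg; exact ⟨c, hc⟩)]

lemma tb_even (G : Multiset Comp) : 2 ∣ tb G := by
  unfold tb; split_ifs <;> norm_num

-- ## membership transfer

lemma chain_mem_erase_loop {G : Multiset Comp} {a l : ℤ} :
    Comp.chain a ∈ G.erase (Comp.loop l) ↔ Comp.chain a ∈ G :=
  Multiset.mem_erase_of_ne (by simp)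

lemma loop_mem_erase_chain {G : Multiset Comp} {a c : ℤ} :
    Comp.loop a ∈ G.erase (Comp.chain c) ↔ Comp.loop a ∈ G :=
  Multiset.mem_erase_of_ne (by simp)

lemma loony_erase {G : Multiset Comp} {p : Comp} (h : IsSimpleLoony G) :
    IsSimpleLoony (G.erase p) := fun q hq => h q (Multiset.mem_of_mem_erase hq)

lemma erase_ne_zero {G : Multiset Comp} {p : Comp} (hp : p ∈ G) (h2 : 2 ≤ G.card) :
    G.erase p ≠ 0 := by
  intro h0
  have := Multiset.card_erase_of_mem hp
  rw [h0] at this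
  simp at this
  omega

-- ## basic v lower bounds

lemma v_cost_lb {G : Multiset Comp} {b : ℤ} (hG : G ≠ 0)
    (hb : ∀ p ∈ G, b ≤ (match p with | Comp.chain c => c - 2 | Comp.loop l => l - 4)) :
    b ≤ v G := by
  apply le_v hG
  intro p hp
  have := hb p hp
  cases p with
  | chain c => have := abs_nonneg (v (G.erase (Comp.chain c)) - 2); simp only [K] at *; linarith
  | loop l => have := abs_nonneg (v (G.erase (Comp.loop l)) - 4); simp only [K] at *; linarith

lemma v_nonneg {G : Multiset Comp} (hG : IsSimpleLoony G) : 0 ≤ v G := by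
  by_cases h : G = 0
  · rw [h, v_zero]
  · apply v_cost_lb h
    intro p hp
    have := hG p hp
    cases p with
    | chain c => simp only at this ⊢; linarith
    | loop l => simp only at this ⊢; linarith

lemma tb_erase_chain_ge {G : Multiset Comp} {c : ℤ} (hc : Comp.chain c ∈ G)
    (h0 : G.erase (Comp.chain c) ≠ 0) : tb G ≤ tb (G.erase (Comp.chain c)) := by
  by_cases hA : (∃ c', 4 ≤ c' ∧ Comp.chain c' ∈ G) ∨ (∀ l, Comp.loop l ∉ G)
  · rw [tb_eq4 (by intro h; rw [h] at hc; exact absurd hc (Multiset.notMem_zero _)) hA]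
    exact tb_ge4 h0
  · push_neg at hA
    obtain ⟨hA1, hA2⟩ := hA
    have h6 : tb G = 6 := tb_eq6 ⟨c, hc⟩ hA2 (fun c' h4 hc' => hA1 c' h4 hc')
    rw [h6]
    -- tb of erase is 6 or 8
    have hA' : ¬((∃ c', 4 ≤ c' ∧ Comp.chain c' ∈ G.erase (Comp.chain c)) ∨
        (∀ l, Comp.loop l ∉ G.erase (Comp.chain c))) := by
      push_neg
      constructor
      · intro c' h4 hc'
        exact hA1 c' h4 (Multiset.mem_of_mem_erase hc')
      · obtain ⟨l, hl⟩ := hA2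
        exact ⟨l, loop_mem_erase_chain.mpr hl⟩
    unfold tb
    rw [if_neg h0, if_neg hA']
    split_ifs <;> norm_num

lemma tb_erase_loop_le {G : Multiset Comp} {l : ℤ} (hl : Comp.loop l ∈ G) :
    tb (G.erase (Comp.loop l)) ≤ tb G := by
  by_cases h0 : G.erase (Comp.loop l) = 0
  · rw [h0, tb_zero]
    exact tb_nonneg G
  by_cases hC : ∃ c, Comp.chain c ∈ G
  · by_cases hA : ∃ c, 4 ≤ c ∧ Comp.chain c ∈ G
    · obtain ⟨c, h4, hc⟩ := hA
      rw [tb_eq4 (by intro h; rw [h] at hl; exact absurd hl (Multiset.notMem_zero _))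
        (Or.inl ⟨c, h4, hc⟩)]
      rw [tb_eq4 h0 (Or.inl ⟨c, h4, chain_mem_erase_loop.mpr hc⟩)]
    · push_neg at hA
      have h6 : tb G = 6 := tb_eq6 hC ⟨l, hl⟩ hA
      rw [h6]
      obtain ⟨c, hc⟩ := hC
      have hc' : Comp.chain c ∈ G.erase (Comp.loop l) := chain_mem_erase_loop.mpr hc
      unfold tb
      rw [if_neg h0]
      split_ifs with h1 h2
      · norm_num
      · exact absurd hc' (h2 c)
      · norm_num
  · push_neg at hC
    rw [tb_eq8 hC ⟨l, hl⟩]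
    exact tb_le8 _

-- ## more tb helpers

lemma tb_le6_of_chain {H : Multiset Comp} (hC : ∃ c, Comp.chain c ∈ H)
    (hA : ∀ c, 4 ≤ c → Comp.chain c ∉ H) : tb H ≤ 6 := by
  obtain ⟨c, hc⟩ := hC
  have h0 : H ≠ 0 := by
    intro h; rw [h] at hc; exact absurd hc (Multiset.notMem_zero _)
  unfold tb
  rw [if_neg h0]
  split_ifs with h1 h2
  · norm_num
  · exact absurd hc (h2 c)
  · norm_num

lemma tb_erase_chain3_le {G : Multiset Comp} (h2 : Comp.chain 3 ∈ G)
    (hE : G.erase (Comp.chain 3) ≠ 0)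
    (hcond : (∃ c, Comp.chain c ∈ G.erase (Comp.chain 3)) ∨
      (∀ l, Comp.loop l ∉ G.erase (Comp.chain 3))) :
    tb (G.erase (Comp.chain 3)) ≤ tb G := by
  have hG0 : G ≠ 0 := by
    intro h; rw [h] at h2; exact absurd h2 (Multiset.notMem_zero _)
  by_cases hL : ∃ l, Comp.loop l ∈ G
  · rcases hcond with hC3 | hL3
    · by_cases hA : ∃ c, 4 ≤ c ∧ Comp.chain c ∈ G
      · obtain ⟨c, h4, hc⟩ := hA
        have hc3 : Comp.chain c ∈ G.erase (Comp.chain 3) :=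
          Multiset.mem_erase_of_ne (by simp; omega) |>.mpr hc
        rw [tb_eq4 hE (Or.inl ⟨c, h4, hc3⟩), tb_eq4 hG0 (Or.inl ⟨c, h4, hc⟩)]
      · push_neg at hA
        have h6 : tb G = 6 := tb_eq6 ⟨3, h2⟩ hL hA
        rw [h6]
        refine le_of_eq (tb_eq6 hC3 ?_ ?_)
        · obtain ⟨l, hl⟩ := hL
          exact ⟨l, loop_mem_erase_chain.mpr hl⟩
        · intro c h4 hc
          exact hA c h4 (Multiset.mem_of_mem_erase hc)
    · exfalso
      obtain ⟨l, hl⟩ := hL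
      exact hL3 l (loop_mem_erase_chain.mpr hl)
  · push_neg at hL
    rw [tb_eq4 hG0 (Or.inr hL), tb_eq4 hE (Or.inr fun l hl => hL l (Multiset.mem_of_mem_erase hl))]

-- ## the main induction

lemma key : ∀ (n : ℕ) (G : Multiset Comp), G.card ≤ n → IsSimpleLoony G →
    cv G ≤ v G ∧ v G ≤ max (cv G) 4 ∧ 2 ∣ (v G - fcv G) := by
  intro n
  induction n with
  | zero =>
    intro G h1 _
    have : G = 0 := Multiset.card_eq_zero.mp (Nat.le_zero.mp h1)
    subst this
    refine ⟨?_, ?_, ?_⟩ <;> simp [v_zero, cv, fcv_zero, tb_zero]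
  | succ n ih =>
    intro G hcard hG
    by_cases hG0 : G = 0
    · subst hG0
      refine ⟨?_, ?_, ?_⟩ <;> simp [v_zero, cv, fcv_zero, tb_zero]
    have hcard' : ∀ p ∈ G, (G.erase p).card ≤ n := by
      intro p hp
      rw [Multiset.card_erase_of_mem hp, Nat.pred_eq_sub_one]
      have : 1 ≤ G.card := Multiset.card_pos.mpr hG0
      omega
    -- parity
    have hpar : 2 ∣ (v G - fcv G) := by
      obtain ⟨p, hp, hv⟩ := v_mem hG0
      have hIH := ih (G.erase p) (hcard' p hp) (loony_erase hG)
      have hdvd := hIH.2.2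
      have hf := fcv_erase hp
      cases p with
      | chain c =>
        simp only [K] at hv
        simp only [w] at hf
        rcases abs_choice (v (G.erase (Comp.chain c)) - 2) with h | h <;> omega
      | loop l =>
        simp only [K] at hv
        simp only [w] at hf
        rcases abs_choice (v (G.erase (Comp.loop l)) - 4) with h | h <;> omega
    -- lower bound cv ≤ v
    have hlow : cv G ≤ v G := by
      apply le_v hG0
      intro p hp
      by_cases hE : G.erase p = 0
      · -- singleton
        have hf := fcv_erase hp
        rw [hE, fcv_zero] at hf
        rw [hE, v_zero]
        cases p with
        | chain c =>
          have htb : tb G = 4 := by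
            refine tb_eq4 hG0 (Or.inr ?_)
            intro l hl
            have hne : (Comp.loop l) ≠ (Comp.chain c) := by simp
            have : Comp.loop l ∈ G.erase (Comp.chain c) :=
              (Multiset.mem_erase_of_ne hne).mpr hl
            rw [hE] at this
            exact absurd this (Multiset.notMem_zero _)
          simp only [K, w] at *
          have : |(0:ℤ) - 2| = 2 := by norm_num
          rw [this]
          simp only [cv]
          omega
        | loop l =>
          have htb : tb G = 8 := by
            refine tb_eq8 ?_ ⟨l, hp⟩
            intro c hc
            have hne : (Comp.chain c) ≠ (Comp.loop l) := by simp
            have : Comp.chain c ∈ G.erase (Comp.loop l) :=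
              (Multiset.mem_erase_of_ne hne).mpr hc
            rw [hE] at this
            exact absurd this (Multiset.notMem_zero _)
          simp only [K, w] at *
          have : |(0:ℤ) - 4| = 4 := by norm_num
          rw [this]
          simp only [cv]
          omega
      · have hIH := ih (G.erase p) (hcard' p hp) (loony_erase hG)
        have hcv' := hIH.1
        have hpar' := hIH.2.2
        have hv0 : 0 ≤ v (G.erase p) := v_nonneg (loony_erase hG)
        have hf := fcv_erase hp
        cases p with
        | chain c =>
          have htb := tb_erase_chain_ge hp hE
          simp only [K, w] at *
          simp only [cv] at hcv' ⊢
          rcases le_total (v (G.erase (Comp.chain c)) - 2) 0 with h | h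
          · rw [abs_of_nonpos h]; omega
          · rw [abs_of_nonneg h]; omega
        | loop l =>
          simp only [K, w] at *
          simp only [cv] at hcv' ⊢
          by_cases hA : ∃ c, 4 ≤ c ∧ Comp.chain c ∈ G
          · have htbG : tb G = 4 := tb_eq4 hG0 (Or.inl hA)
            obtain ⟨c, h4, hc⟩ := hA
            have htb' : tb (G.erase (Comp.loop l)) = 4 :=
              tb_eq4 hE (Or.inl ⟨c, h4, chain_mem_erase_loop.mpr hc⟩)
            rcases le_total (v (G.erase (Comp.loop l)) - 4) 0 with h | h
            · rw [abs_of_nonpos h]; omega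
            · rw [abs_of_nonneg h]; omega
          · by_cases hC : ∃ c, Comp.chain c ∈ G
            · push_neg at hA
              have htbG : tb G = 6 := tb_eq6 hC ⟨l, hp⟩ hA
              obtain ⟨c, hc⟩ := hC
              have hc' : Comp.chain c ∈ G.erase (Comp.loop l) := chain_mem_erase_loop.mpr hc
              by_cases hL' : ∃ l', Comp.loop l' ∈ G.erase (Comp.loop l)
              · have htb' : tb (G.erase (Comp.loop l)) = 6 := by
                  refine tb_eq6 ⟨c, hc'⟩ hL' ?_
                  intro c' h4 hc''
                  exact hA c' h4 (Multiset.mem_of_mem_erase hc'')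
                rcases le_total (v (G.erase (Comp.loop l)) - 4) 0 with h | h
                · rw [abs_of_nonpos h]; omega
                · rw [abs_of_nonneg h]; omega
              · push_neg at hL'
                have htb' : tb (G.erase (Comp.loop l)) = 4 := tb_eq4 hE (Or.inr hL')
                -- all elements of the erased game are 3-chains
                have hfcv' : fcv (G.erase (Comp.loop l)) ≤ -1 := by
                  obtain ⟨q, hq⟩ := Multiset.exists_mem_of_ne_zero hE
                  have hfe := fcv_erase hq
                  have hq0 : fcv ((G.erase (Comp.loop l)).erase q) ≤ 0 := by
                    apply fcv_nonpos
                    intro r hr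
                    have hrG : r ∈ G.erase (Comp.loop l) := Multiset.mem_of_mem_erase hr
                    cases r with
                    | chain a =>
                      have h3a : (3:ℤ) ≤ a := hG _ (Multiset.mem_of_mem_erase hrG)
                      have : ¬ (4 ≤ a) := fun h4 => hA a h4 (Multiset.mem_of_mem_erase hrG)
                      simp only [w]; omega
                    | loop a => exact absurd hrG (hL' a)
                  have hwq : w q ≤ -1 := by
                    cases q with
                    | chain a =>
                      have h3a : (3:ℤ) ≤ a := hG _ (Multiset.mem_of_mem_erase hq)
                      have : ¬ (4 ≤ a) := fun h4 => hA a h4 (Multiset.mem_of_mem_erase hq)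
                      simp only [w]; omega
                    | loop a => exact absurd hq (hL' a)
                  omega
                rcases le_total (v (G.erase (Comp.loop l)) - 4) 0 with h | h
                · rw [abs_of_nonpos h]; omega
                · rw [abs_of_nonneg h]; omega
            · push_neg at hC
              have htbG : tb G = 8 := tb_eq8 hC ⟨l, hp⟩
              have htb' : tb (G.erase (Comp.loop l)) = 8 := by
                obtain ⟨q, hq⟩ := Multiset.exists_mem_of_ne_zero hE
                cases q with
                | chain a => exact absurd (Multiset.mem_of_mem_erase hq) (hC a)
                | loop a =>
                  refine tb_eq8 ?_ ⟨a, hq⟩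
                  intro c' hc'
                  exact hC c' (Multiset.mem_of_mem_erase hc')
              rcases le_total (v (G.erase (Comp.loop l)) - 4) 0 with h | h
              · rw [abs_of_nonpos h]; omega
              · rw [abs_of_nonneg h]; omega
    refine ⟨hlow, ?_, hpar⟩
    by_cases hc2 : 2 ≤ G.card
    case neg =>
      -- singleton
      have hc1 : G.card = 1 := by
        have : 1 ≤ G.card := Multiset.card_pos.mpr hG0
        omega
      obtain ⟨p, rfl⟩ := Multiset.card_eq_one.mp hc1
      have hp : p ∈ ({p} : Multiset Comp) := Multiset.mem_singleton_self p
      have hK := v_le hp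
      have hE : ({p} : Multiset Comp).erase p = 0 := Multiset.erase_singleton p
      rw [hE, v_zero] at hK
      have hf := fcv_erase hp
      rw [hE, fcv_zero] at hf
      rw [le_max_iff]
      cases p with
      | chain c =>
        have htb : tb ({Comp.chain c} : Multiset Comp) = 4 := by
          refine tb_eq4 hG0 (Or.inr ?_)
          intro l hl
          rw [Multiset.mem_singleton] at hl
          exact absurd hl (by simp)
        simp only [K, w] at hK hf
        have habs : |(0:ℤ) - 2| = 2 := by norm_num
        rw [habs] at hK
        simp only [cv]
        omega
      | loop l =>
        have htb : tb ({Comp.loop l} : Multiset Comp) = 8 := by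
          refine tb_eq8 ?_ ⟨l, hp⟩
          intro c hc
          rw [Multiset.mem_singleton] at hc
          exact absurd hc (by simp)
        simp only [K, w] at hK hf
        have habs : |(0:ℤ) - 4| = 4 := by norm_num
        rw [habs] at hK
        simp only [cv]
        omega
    case pos =>
    by_cases h1 : Comp.loop 4 ∈ G
    · -- A : open the 4-loop
      have hE := erase_ne_zero h1 hc2
      have hIH := ih _ (hcard' _ h1) (loony_erase hG)
      have hvu := le_max_iff.mp hIH.2.1
      have hv0 : 0 ≤ v (G.erase (Comp.loop 4)) := v_nonneg (loony_erase hG)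
      have hf := fcv_erase h1
      have hK := v_le h1
      have htb := tb_erase_loop_le h1
      simp only [K, w] at hK hf
      simp only [cv] at hvu ⊢
      rw [le_max_iff]
      rcases le_total (v (G.erase (Comp.loop 4)) - 4) 0 with h | h
      · rw [abs_of_nonpos h] at hK; omega
      · rw [abs_of_nonneg h] at hK; omega
    by_cases h2 : Comp.chain 3 ∈ G
    · by_cases h3 : (∃ c, Comp.chain c ∈ G.erase (Comp.chain 3)) ∨
          (∀ l, Comp.loop l ∉ G.erase (Comp.chain 3))
      · -- B1 : open the 3-chain
        have hE := erase_ne_zero h2 hc2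
        have hIH := ih _ (hcard' _ h2) (loony_erase hG)
        have hvu := le_max_iff.mp hIH.2.1
        have hv0 : 0 ≤ v (G.erase (Comp.chain 3)) := v_nonneg (loony_erase hG)
        have hf := fcv_erase h2
        have hK := v_le h2
        have htb := tb_erase_chain3_le h2 hE h3
        simp only [K, w] at hK hf
        simp only [cv] at hvu ⊢
        rw [le_max_iff]
        rcases le_total (v (G.erase (Comp.chain 3)) - 2) 0 with h | h
        · rw [abs_of_nonpos h] at hK; omega
        · rw [abs_of_nonneg h] at hK; omega
      · push_neg at h3
        obtain ⟨hnc, hl3⟩ := h3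
        have hA : ∀ c, 4 ≤ c → Comp.chain c ∉ G := by
          intro c h4 hc
          exact hnc c ((Multiset.mem_erase_of_ne (by simp; omega)).mpr hc)
        obtain ⟨l0, hl0⟩ := hl3
        have hL : ∃ l, Comp.loop l ∈ G := ⟨l0, Multiset.mem_of_mem_erase hl0⟩
        have htbG : tb G = 6 := tb_eq6 ⟨3, h2⟩ hL hA
        by_cases h4 : cv G ≤ 2
        · -- B2 : open the 3-chain
          have hE := erase_ne_zero h2 hc2
          have hIH := ih _ (hcard' _ h2) (loony_erase hG)
          have hvu := le_max_iff.mp hIH.2.1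
          have hv0 : 0 ≤ v (G.erase (Comp.chain 3)) := v_nonneg (loony_erase hG)
          have hf := fcv_erase h2
          have hK := v_le h2
          have htb := tb_le8 (G.erase (Comp.chain 3))
          simp only [K, w] at hK hf
          simp only [cv] at hvu h4 ⊢
          rw [le_max_iff]
          rcases le_total (v (G.erase (Comp.chain 3)) - 2) 0 with h | h
          · rw [abs_of_nonpos h] at hK; omega
          · rw [abs_of_nonneg h] at hK; omega
        · push_neg at h4
          by_cases h5 : Comp.loop 6 ∈ G
          · -- B3a : open the 6-loop
            have hE := erase_ne_zero h5 hc2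
            have hIH := ih _ (hcard' _ h5) (loony_erase hG)
            have hcv' := hIH.1
            have hvu := le_max_iff.mp hIH.2.1
            have hv0 : 0 ≤ v (G.erase (Comp.loop 6)) := v_nonneg (loony_erase hG)
            have hf := fcv_erase h5
            have hK := v_le h5
            have hc3' : Comp.chain 3 ∈ G.erase (Comp.loop 6) :=
              (Multiset.mem_erase_of_ne (by simp)).mpr h2
            have htble : tb (G.erase (Comp.loop 6)) ≤ 6 :=
              tb_le6_of_chain ⟨3, hc3'⟩
                (fun c h4' hc => hA c h4' (Multiset.mem_of_mem_erase hc))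
            have htbge : 4 ≤ tb (G.erase (Comp.loop 6)) := tb_ge4 hE
            simp only [K, w] at hK hf
            simp only [cv] at hcv' hvu h4 ⊢
            rw [le_max_iff]
            rcases le_total (v (G.erase (Comp.loop 6)) - 4) 0 with h | h
            · rw [abs_of_nonpos h] at hK; omega
            · rw [abs_of_nonneg h] at hK; omega
          · -- B3b : open a big loop
            have hll : Comp.loop l0 ∈ G := Multiset.mem_of_mem_erase hl0
            have hl8 : 8 ≤ l0 := by
              obtain ⟨h4l, hev⟩ := hG _ hll
              obtain ⟨k, hk⟩ := hev
              have hne4 : l0 ≠ 4 := by rintro rfl; exact h1 hll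
              have hne6 : l0 ≠ 6 := by rintro rfl; exact h5 hll
              omega
            have hE := erase_ne_zero hll hc2
            have hIH := ih _ (hcard' _ hll) (loony_erase hG)
            have hcv' := hIH.1
            have hvu := le_max_iff.mp hIH.2.1
            have hv0 : 0 ≤ v (G.erase (Comp.loop l0)) := v_nonneg (loony_erase hG)
            have hf := fcv_erase hll
            have hK := v_le hll
            have hc3' : Comp.chain 3 ∈ G.erase (Comp.loop l0) :=
              (Multiset.mem_erase_of_ne (by simp)).mpr h2
            have htble : tb (G.erase (Comp.loop l0)) ≤ 6 :=
              tb_le6_of_chain ⟨3, hc3'⟩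
                (fun c h4' hc => hA c h4' (Multiset.mem_of_mem_erase hc))
            have htbge : 4 ≤ tb (G.erase (Comp.loop l0)) := tb_ge4 hE
            have hfcv' : -1 ≤ fcv (G.erase (Comp.loop l0)) := by
              have hfe := fcv_erase hc3'
              have h0' : 0 ≤ fcv ((G.erase (Comp.loop l0)).erase (Comp.chain 3)) := by
                apply fcv_nonneg
                intro r hr
                rw [Multiset.erase_comm] at hr
                have hrG3 : r ∈ G.erase (Comp.chain 3) := Multiset.mem_of_mem_erase hr
                have hrG : r ∈ G := Multiset.mem_of_mem_erase hrG3
                cases r with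
                | chain a => exact absurd hrG3 (hnc a)
                | loop a =>
                  obtain ⟨h4a, hev⟩ := hG _ hrG
                  obtain ⟨k, hk⟩ := hev
                  have hne4 : a ≠ 4 := by rintro rfl; exact h1 hrG
                  have hne6 : a ≠ 6 := by rintro rfl; exact h5 hrG
                  simp only [w]; omega
              simp only [w] at hfe
              omega
            simp only [K, w] at hK hf
            simp only [cv] at hcv' hvu h4 ⊢
            rw [le_max_iff]
            rcases le_total (v (G.erase (Comp.loop l0)) - 4) 0 with h | h
            · rw [abs_of_nonpos h] at hK; omega
            · rw [abs_of_nonneg h] at hK; omega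
    -- no 3-chain, no 4-loop
    by_cases h6 : ∃ c, Comp.chain c ∈ G
    · obtain ⟨c0, hc0⟩ := h6
      have hc4 : 4 ≤ c0 := by
        have h3c : (3:ℤ) ≤ c0 := hG _ hc0
        have hne : c0 ≠ 3 := by rintro rfl; exact h2 hc0
        omega
      by_cases h7 : ∃ l, Comp.loop l ∈ G
      · obtain ⟨l1, hl1⟩ := h7
        by_cases h8 : Comp.loop 6 ∈ G
        · -- Ca2 : open the 6-loop
          have hE := erase_ne_zero h8 hc2
          have hIH := ih _ (hcard' _ h8) (loony_erase hG)
          have hvu := le_max_iff.mp hIH.2.1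
          have hv0 : 0 ≤ v (G.erase (Comp.loop 6)) := v_nonneg (loony_erase hG)
          have hf := fcv_erase h8
          have hK := v_le h8
          have htbG : tb G = 4 := tb_eq4 hG0 (Or.inl ⟨c0, hc4, hc0⟩)
          have htb' : tb (G.erase (Comp.loop 6)) = 4 :=
            tb_eq4 hE (Or.inl ⟨c0, hc4, chain_mem_erase_loop.mpr hc0⟩)
          have hv2 : 2 ≤ v (G.erase (Comp.loop 6)) := by
            apply v_cost_lb hE
            intro q hq
            have hqG : q ∈ G := Multiset.mem_of_mem_erase hq
            cases q with
            | chain a =>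
              have h3a : (3:ℤ) ≤ a := hG _ hqG
              have hne : a ≠ 3 := by rintro rfl; exact h2 hqG
              show (2:ℤ) ≤ a - 2
              omega
            | loop a =>
              obtain ⟨h4a, hev⟩ := hG _ hqG
              obtain ⟨k, hk⟩ := hev
              have hne : a ≠ 4 := by rintro rfl; exact h1 hqG
              show (2:ℤ) ≤ a - 4
              omega
          simp only [K, w] at hK hf
          simp only [cv] at hvu ⊢
          rw [le_max_iff]
          rcases le_total (v (G.erase (Comp.loop 6)) - 4) 0 with h | h
          · rw [abs_of_nonpos h] at hK; omega
          · rw [abs_of_nonneg h] at hK; omega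
        · -- Ca3 : open a big loop
          have hl8 : 8 ≤ l1 := by
            obtain ⟨h4l, hev⟩ := hG _ hl1
            obtain ⟨k, hk⟩ := hev
            have hne4 : l1 ≠ 4 := by rintro rfl; exact h1 hl1
            have hne6 : l1 ≠ 6 := by rintro rfl; exact h8 hl1
            omega
          have hE := erase_ne_zero hl1 hc2
          have hIH := ih _ (hcard' _ hl1) (loony_erase hG)
          have hcv' := hIH.1
          have hvu := le_max_iff.mp hIH.2.1
          have hv0 : 0 ≤ v (G.erase (Comp.loop l1)) := v_nonneg (loony_erase hG)
          have hf := fcv_erase hl1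
          have hK := v_le hl1
          have htbG : tb G = 4 := tb_eq4 hG0 (Or.inl ⟨c0, hc4, hc0⟩)
          have htb' : tb (G.erase (Comp.loop l1)) = 4 :=
            tb_eq4 hE (Or.inl ⟨c0, hc4, chain_mem_erase_loop.mpr hc0⟩)
          have hfcv' : 0 ≤ fcv (G.erase (Comp.loop l1)) := by
            apply fcv_nonneg
            intro r hr
            have hrG : r ∈ G := Multiset.mem_of_mem_erase hr
            cases r with
            | chain a =>
              have h3a : (3:ℤ) ≤ a := hG _ hrG
              have hne : a ≠ 3 := by rintro rfl; exact h2 hrG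
              simp only [w]; omega
            | loop a =>
              obtain ⟨h4a, hev⟩ := hG _ hrG
              obtain ⟨k, hk⟩ := hev
              have hne4 : a ≠ 4 := by rintro rfl; exact h1 hrG
              have hne6 : a ≠ 6 := by rintro rfl; exact h8 hrG
              simp only [w]; omega
          simp only [K, w] at hK hf
          simp only [cv] at hcv' hvu ⊢
          rw [le_max_iff]
          rcases le_total (v (G.erase (Comp.loop l1)) - 4) 0 with h | h
          · rw [abs_of_nonpos h] at hK; omega
          · rw [abs_of_nonneg h] at hK; omega
      · -- Ca1 : open a chain, no loops
        push_neg at h7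
        have hE := erase_ne_zero hc0 hc2
        have hIH := ih _ (hcard' _ hc0) (loony_erase hG)
        have hvu := le_max_iff.mp hIH.2.1
        have hv0 : 0 ≤ v (G.erase (Comp.chain c0)) := v_nonneg (loony_erase hG)
        have hf := fcv_erase hc0
        have hK := v_le hc0
        have htbG : tb G = 4 := tb_eq4 hG0 (Or.inr h7)
        have htb' : tb (G.erase (Comp.chain c0)) = 4 :=
          tb_eq4 hE (Or.inr fun l hl => h7 l (Multiset.mem_of_mem_erase hl))
        have hfcv' : 0 ≤ fcv (G.erase (Comp.chain c0)) := by
          apply fcv_nonneg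
          intro r hr
          have hrG : r ∈ G := Multiset.mem_of_mem_erase hr
          cases r with
          | chain a =>
            have h3a : (3:ℤ) ≤ a := hG _ hrG
            have hne : a ≠ 3 := by rintro rfl; exact h2 hrG
            simp only [w]; omega
          | loop a => exact absurd hrG (h7 a)
        simp only [K, w] at hK hf
        simp only [cv] at hvu ⊢
        rw [le_max_iff]
        rcases le_total (v (G.erase (Comp.chain c0)) - 2) 0 with h | h
        · rw [abs_of_nonpos h] at hK; omega
        · rw [abs_of_nonneg h] at hK; omega
    · -- no chains at all
      push_neg at h6
      by_cases h8 : Comp.loop 6 ∈ G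
      · -- Cb1 : open the 6-loop
        have hE := erase_ne_zero h8 hc2
        have hIH := ih _ (hcard' _ h8) (loony_erase hG)
        have hvu := le_max_iff.mp hIH.2.1
        have hv0 : 0 ≤ v (G.erase (Comp.loop 6)) := v_nonneg (loony_erase hG)
        have hf := fcv_erase h8
        have hK := v_le h8
        have htbG : tb G = 8 := tb_eq8 h6 ⟨6, h8⟩
        have htb' : tb (G.erase (Comp.loop 6)) = 8 := by
          obtain ⟨q, hq⟩ := Multiset.exists_mem_of_ne_zero hE
          cases q with
          | chain a => exact absurd (Multiset.mem_of_mem_erase hq) (h6 a)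
          | loop a =>
            exact tb_eq8 (fun c hc => h6 c (Multiset.mem_of_mem_erase hc)) ⟨a, hq⟩
        have hv2 : 2 ≤ v (G.erase (Comp.loop 6)) := by
          apply v_cost_lb hE
          intro q hq
          have hqG : q ∈ G := Multiset.mem_of_mem_erase hq
          cases q with
          | chain a => exact absurd hqG (h6 a)
          | loop a =>
            obtain ⟨h4a, hev⟩ := hG _ hqG
            obtain ⟨k, hk⟩ := hev
            have hne : a ≠ 4 := by rintro rfl; exact h1 hqG
            show (2:ℤ) ≤ a - 4
            omega
        simp only [K, w] at hK hf
        simp only [cv] at hvu ⊢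
        rw [le_max_iff]
        rcases le_total (v (G.erase (Comp.loop 6)) - 4) 0 with h | h
        · rw [abs_of_nonpos h] at hK; omega
        · rw [abs_of_nonneg h] at hK; omega
      · -- Cb2 : all loops at least 8
        obtain ⟨q, hq⟩ := Multiset.exists_mem_of_ne_zero hG0
        cases q with
        | chain a => exact absurd hq (h6 a)
        | loop l1 =>
          have hl8 : 8 ≤ l1 := by
            obtain ⟨h4l, hev⟩ := hG _ hq
            obtain ⟨k, hk⟩ := hev
            have hne4 : l1 ≠ 4 := by rintro rfl; exact h1 hq
            have hne6 : l1 ≠ 6 := by rintro rfl; exact h8 hq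
            omega
          have hE := erase_ne_zero hq hc2
          have hIH := ih _ (hcard' _ hq) (loony_erase hG)
          have hvu := le_max_iff.mp hIH.2.1
          have hv0 : 0 ≤ v (G.erase (Comp.loop l1)) := v_nonneg (loony_erase hG)
          have hf := fcv_erase hq
          have hK := v_le hq
          have htbG : tb G = 8 := tb_eq8 h6 ⟨l1, hq⟩
          have htb' : tb (G.erase (Comp.loop l1)) = 8 := by
            obtain ⟨q', hq'⟩ := Multiset.exists_mem_of_ne_zero hE
            cases q' with
            | chain a => exact absurd (Multiset.mem_of_mem_erase hq') (h6 a)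
            | loop a =>
              exact tb_eq8 (fun c hc => h6 c (Multiset.mem_of_mem_erase hc)) ⟨a, hq'⟩
          have hfcv' : 0 ≤ fcv (G.erase (Comp.loop l1)) := by
            apply fcv_nonneg
            intro r hr
            have hrG : r ∈ G := Multiset.mem_of_mem_erase hr
            cases r with
            | chain a => exact absurd hrG (h6 a)
            | loop a =>
              obtain ⟨h4a, hev⟩ := hG _ hrG
              obtain ⟨k, hk⟩ := hev
              have hne4 : a ≠ 4 := by rintro rfl; exact h1 hrG
              have hne6 : a ≠ 6 := by rintro rfl; exact h8 hrG
              simp only [w]; omega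
          simp only [K, w] at hK hf
          simp only [cv] at hvu ⊢
          rw [le_max_iff]
          rcases le_total (v (G.erase (Comp.loop l1)) - 4) 0 with h | h
          · rw [abs_of_nonpos h] at hK; omega
          · rw [abs_of_nonneg h] at hK; omega


theorem stmt12 (G : Multiset Comp) (hG : IsSimpleLoony G) (h : cv G < 2) :
    0 ≤ v G ∧ v G ≤ 4 ∧ v G ≡ cv G [ZMOD 2] ∧
    (Comp.chain 3 ∈ G →
      v G ≤ 1 + |v (G.erase (Comp.chain 3)) - 2| ∧
      1 + |v (G.erase (Comp.chain 3)) - 2| ≤ 3) := by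
  have hk := key G.card G le_rfl hG
  have hv0 : 0 ≤ v G := v_nonneg hG
  have hle4 : v G ≤ 4 := by
    rcases le_max_iff.mp hk.2.1 with h' | h'
    · linarith
    · exact h'
  refine ⟨hv0, hle4, ?_, ?_⟩
  · have hd := hk.2.2
    have ht := tb_even G
    rw [Int.modEq_iff_dvd]
    show 2 ∣ cv G - v G
    simp only [cv]
    omega
  · intro h3
    have hG0 : G ≠ 0 := by
      intro h0; rw [h0] at h3; exact absurd h3 (Multiset.notMem_zero _)
    have hK := v_le h3
    simp only [K] at hK
    constructor
    · linarith
    · have hloo := loony_erase (p := Comp.chain 3) hG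
      have hv0' : 0 ≤ v (G.erase (Comp.chain 3)) := v_nonneg hloo
      have hk3 := key _ (G.erase (Comp.chain 3)) le_rfl hloo
      have hcv3 : cv (G.erase (Comp.chain 3)) ≤ 4 := by
        have hf := fcv_erase h3
        simp only [w] at hf
        by_cases hA : ∃ c, 4 ≤ c ∧ Comp.chain c ∈ G
        · have htbG : tb G = 4 := tb_eq4 hG0 (Or.inl hA)
          obtain ⟨c, h4c, hc⟩ := hA
          have hc' : Comp.chain c ∈ G.erase (Comp.chain 3) :=
            (Multiset.mem_erase_of_ne (by simp; omega)).mpr hc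
          have hE : G.erase (Comp.chain 3) ≠ 0 := by
            intro h0; rw [h0] at hc'; exact absurd hc' (Multiset.notMem_zero _)
          have htb' : tb (G.erase (Comp.chain 3)) = 4 := tb_eq4 hE (Or.inl ⟨c, h4c, hc'⟩)
          simp only [cv] at h ⊢
          omega
        · by_cases hL : ∃ l, Comp.loop l ∈ G
          · push_neg at hA
            have htbG : tb G = 6 := tb_eq6 ⟨3, h3⟩ hL hA
            have htb' : tb (G.erase (Comp.chain 3)) ≤ 8 := tb_le8 _
            simp only [cv] at h ⊢
            omega
          · push_neg at hL
            have htbG : tb G = 4 := tb_eq4 hG0 (Or.inr hL)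
            have htb' : tb (G.erase (Comp.chain 3)) ≤ 4 := by
              by_cases hE : G.erase (Comp.chain 3) = 0
              · rw [hE, tb_zero]; norm_num
              · exact le_of_eq
                  (tb_eq4 hE (Or.inr fun l hl => hL l (Multiset.mem_of_mem_erase hl)))
            simp only [cv] at h ⊢
            omega
      have hle4' : v (G.erase (Comp.chain 3)) ≤ 4 := by
        rcases le_max_iff.mp hk3.2.1 with h' | h'
        · linarith
        · exact h'
      have habs : |v (G.erase (Comp.chain 3)) - 2| ≤ 2 :=
        abs_le.mpr ⟨by linarith, by linarith⟩
      linarith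
end
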